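/- arXiv:2406.10595 — 4 statements merged into one kernel-verified Lean document; each statement's English description precedes it below -/
import Mathlib

section
/- Let I be a monomial ideal of S = k[x_1,...,x_n] all of whose minimal generators have degree d. Then I satisfies property N_2 if and only if for all minimal monomial generators u, v of I, the graph G_I(u,v) is connected. -/
/- # Preliminary definitions

We work in the polynomial ring `S = k[x_1,…,x_n]`, realized as `MvPolynomial (Fin n) kk`.

* Graded pieces of `Tor_i^S(M, k)` are realized via the (graded) Koszul complex
  `M ⊗ Λ•(S^n)`: the degree-`j` strand in homological degree `i` is the complex
  whose `i`-th term is the direct sum over `i`-subsets `T` of the variables of the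
  degree `j - i` graded piece of `M`.  `TorNonzero` expresses nonvanishing of the
  homology of this strand, i.e. `Tor_i^S(M, k)_j ≠ 0`.
* `reg` is the Castelnuovo–Mumford regularity `max { j - i | Tor_i(M,k)_j ≠ 0 }`.
* `SatisfiesN I d p` says the minimal free resolution of `I` is linear for the first
  `p - 1` steps (with generators in degree `d`), i.e. `Tor_i(I,k)_j = 0` unless
  `j = d + i`, for all `i < p`.  `SatisfiesN I d 2` is "linearly presented". -/

open MvPolynomial

/-- The `i`-th term of the Koszul complex on the variables of `k[x_1,…,x_n]`,
with coefficients in the ring itself: a copy of `S` for each `i`-subset of variables. -/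
abbrev KModule (kk : Type) [Field kk] (n : ℕ) (i : ℕ) : Type :=
  {T : Finset (Fin n) // T.card = i} → MvPolynomial (Fin n) kk

/-- The Koszul differential `K_{m+1} → K_m`. -/
noncomputable def Dmap (kk : Type) [Field kk] (n : ℕ) (m : ℕ) :
    KModule kk n (m + 1) →ₗ[kk] KModule kk n m where
  toFun f T := ∑ t ∈ (T.1ᶜ).attach,
    ((-1 : kk) ^ ((T.1.filter (fun s => s < t.1)).card)) •
      (X t.1 * f ⟨insert t.1 T.1, by
        rw [Finset.card_insert_of_notMem (Finset.mem_compl.mp t.2), T.2]⟩)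
  map_add' f g := by
    funext T
    simp [mul_add, smul_add, Finset.sum_add_distrib]
  map_smul' c f := by
    funext T
    dsimp only [RingHom.id_apply, Pi.smul_apply]
    rw [Finset.smul_sum]
    refine Finset.sum_congr rfl fun t _ => ?_
    rw [mul_smul_comm, smul_comm]

/-- The Koszul differential out of homological degree `i` (the zero map for `i = 0`). -/
noncomputable def Dout (kk : Type) [Field kk] (n : ℕ) :
    (i : ℕ) → (KModule kk n i →ₗ[kk] KModule kk n (i - 1))
  | 0 => 0
  | (m + 1) => Dmap kk n m

/-- The degree-`m` graded piece of an ideal `I ⊆ k[x_1,…,x_n]`,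
as a `k`-subspace (zero in negative degrees). -/
noncomputable def gradedPiece {kk : Type} [Field kk] {n : ℕ}
    (I : Ideal (MvPolynomial (Fin n) kk)) (m : ℤ) :
    Submodule kk (MvPolynomial (Fin n) kk) :=
  if m < 0 then ⊥
  else (Submodule.restrictScalars kk I) ⊓ (homogeneousSubmodule (Fin n) kk m.toNat)

/-- The degree-`j` strand of the Koszul complex of `I` in homological degree `i`. -/
noncomputable def koszulStrand {kk : Type} [Field kk] {n : ℕ}
    (I : Ideal (MvPolynomial (Fin n) kk)) (i : ℕ) (j : ℤ) :
    Submodule kk (KModule kk n i) :=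
  Submodule.pi Set.univ (fun _ => gradedPiece I (j - i))

/-- `TorNonzero I i j` states that `Tor_i^S(I, k)_j ≠ 0`, computed as the homology of the
degree-`j` strand of the Koszul complex of `I`. -/
noncomputable def TorNonzero {kk : Type} [Field kk] {n : ℕ}
    (I : Ideal (MvPolynomial (Fin n) kk)) (i : ℕ) (j : ℤ) : Prop :=
  ¬ ((koszulStrand I i j ⊓ LinearMap.ker (Dout kk n i)) ≤
      Submodule.map (Dmap kk n i) (koszulStrand I (i + 1) j))

/-- The Castelnuovo–Mumford regularity of an ideal `I ⊆ k[x_1,…,x_n]`: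
`reg I = max { j - i : Tor_i^S(I,k)_j ≠ 0 }`. -/
noncomputable def reg {kk : Type} [Field kk] {n : ℕ}
    (I : Ideal (MvPolynomial (Fin n) kk)) : ℤ :=
  sSup { r : ℤ | ∃ (i : ℕ) (j : ℤ), TorNonzero I i j ∧ r = j - i }

/-- Property `N_p` for the ideal `I` (with generators in degree `d`): the minimal graded free
resolution of `I` is linear for `p - 1` steps, i.e. `Tor_i^S(I,k)_j = 0` for `i < p`
unless `j = d + i`. -/
noncomputable def SatisfiesN {kk : Type} [Field kk] {n : ℕ}
    (I : Ideal (MvPolynomial (Fin n) kk)) (d : ℕ) (p : ℕ) : Prop :=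
  ∀ i : ℕ, i < p → ∀ j : ℤ, TorNonzero I i j → j = (d : ℤ) + i

/-- The squarefree monomial `∏_{i ∈ T} x_i`. -/
noncomputable def sqMonomial (kk : Type) [Field kk] {n : ℕ} (T : Finset (Fin n)) :
    MvPolynomial (Fin n) kk :=
  ∏ i ∈ T, X i

/-- `I` is a squarefree monomial ideal generated (up to minimality) by squarefree
monomials of degree `d`. -/
def IsSqfreeMonomialIdealGenInDeg {kk : Type} [Field kk] {n : ℕ}
    (I : Ideal (MvPolynomial (Fin n) kk)) (d : ℕ) : Prop :=
  ∃ G : Set (Finset (Fin n)), (∀ T ∈ G, T.card = d) ∧ I = Ideal.span (sqMonomial kk '' G)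

/-- `I` is a squarefree monomial ideal. -/
def IsSqfreeMonomialIdeal {kk : Type} [Field kk] {n : ℕ}
    (I : Ideal (MvPolynomial (Fin n) kk)) : Prop :=
  ∃ G : Set (Finset (Fin n)), I = Ideal.span (sqMonomial kk '' G)

/-- `I` is a monomial ideal. -/
def IsMonomialIdeal {kk : Type} [Field kk] {n : ℕ}
    (I : Ideal (MvPolynomial (Fin n) kk)) : Prop :=
  ∃ A : Set (Fin n →₀ ℕ), I = Ideal.span ((fun a => monomial a (1 : kk)) '' A)

/-- The monomial with exponent vector `a` is a minimal monomial generator of the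
monomial ideal `I`: it lies in `I` and no proper monomial divisor of it lies in `I`. -/
def IsMinGen {kk : Type} [Field kk] {n : ℕ}
    (I : Ideal (MvPolynomial (Fin n) kk)) (a : Fin n →₀ ℕ) : Prop :=
  monomial a (1 : kk) ∈ I ∧ ∀ b : Fin n →₀ ℕ, b ≤ a → monomial b (1 : kk) ∈ I → b = a

/-- The (total) degree of the monomial with exponent vector `a`. -/
def degExp {n : ℕ} (a : Fin n →₀ ℕ) : ℕ := a.sum fun _ e => e

/-- The graph `G_I` on the minimal monomial generators of `I` (encoded by their exponent
vectors), where two distinct generators `u, v` are adjacent iff `deg lcm(u,v) = d + 1`. -/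
def genGraph {kk : Type} [Field kk] {n : ℕ}
    (I : Ideal (MvPolynomial (Fin n) kk)) (d : ℕ) : SimpleGraph (Fin n →₀ ℕ) where
  Adj u v := IsMinGen I u ∧ IsMinGen I v ∧ u ≠ v ∧ degExp (u ⊔ v) = d + 1
  symm := by
    constructor
    intro u v h
    refine ⟨h.2.1, h.1, h.2.2.1.symm, ?_⟩
    rw [sup_comm]
    exact h.2.2.2
  loopless := by
    constructor
    intro u h
    exact h.2.2.1 rfl

/-- `G_I(u,v)` is connected: the subgraph of `G_I` induced on the minimal generators
dividing `lcm(u,v)` is connected. -/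
def GIConnected {kk : Type} [Field kk] {n : ℕ}
    (I : Ideal (MvPolynomial (Fin n) kk)) (d : ℕ) (u v : Fin n →₀ ℕ) : Prop :=
  ((genGraph I d).induce {w : Fin n →₀ ℕ | IsMinGen I w ∧ w ≤ u ⊔ v}).Connected

/-- The restriction `I(U)` of a monomial ideal to a subset `U` of the variables:
the ideal generated by the minimal monomial generators supported in `U`. -/
noncomputable def restrictIdeal {kk : Type} [Field kk] {n : ℕ}
    (I : Ideal (MvPolynomial (Fin n) kk)) (U : Set (Fin n)) :
    Ideal (MvPolynomial (Fin n) kk) :=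
  Ideal.span { p | ∃ a : Fin n →₀ ℕ, IsMinGen I a ∧ (↑a.support : Set (Fin n)) ⊆ U ∧
    p = monomial a (1 : kk) }

/-- `I_f`: the ideal generated by the minimal monomial generators of `I` divisible by the
monomial with exponent vector `c`. -/
noncomputable def subIdeal {kk : Type} [Field kk] {n : ℕ}
    (I : Ideal (MvPolynomial (Fin n) kk)) (c : Fin n →₀ ℕ) :
    Ideal (MvPolynomial (Fin n) kk) :=
  Ideal.span { p | ∃ a : Fin n →₀ ℕ, IsMinGen I a ∧ c ≤ a ∧ p = monomial a (1 : kk) }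

/-- `Ī_f`: the ideal generated by `g / f` as `g` ranges over the minimal monomial
generators of `I` divisible by the monomial `f` with exponent vector `c`. -/
noncomputable def barIdeal {kk : Type} [Field kk] {n : ℕ}
    (I : Ideal (MvPolynomial (Fin n) kk)) (c : Fin n →₀ ℕ) :
    Ideal (MvPolynomial (Fin n) kk) :=
  Ideal.span { p | ∃ a : Fin n →₀ ℕ, IsMinGen I a ∧ c ≤ a ∧ p = monomial (a - c) (1 : kk) }

/-- `J_{[d]}`: the squarefree monomial ideal generated by all squarefree monomials of
degree `d` lying in `J`. -/
noncomputable def sqfreePart {kk : Type} [Field kk] {n : ℕ}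
    (J : Ideal (MvPolynomial (Fin n) kk)) (d : ℕ) :
    Ideal (MvPolynomial (Fin n) kk) :=
  Ideal.span { p | ∃ T : Finset (Fin n), T.card = d ∧ sqMonomial kk T ∈ J ∧
    p = sqMonomial kk T }

/-- The Alexander dual `I^∨` of a squarefree monomial ideal `I`: the Stanley–Reisner ideal
of the Alexander dual complex, generated by the squarefree monomials `x_T` such that
`x_{Tᶜ} ∉ I`. -/
noncomputable def alexDual {kk : Type} [Field kk] {n : ℕ}
    (I : Ideal (MvPolynomial (Fin n) kk)) : Ideal (MvPolynomial (Fin n) kk) :=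
  Ideal.span { p | ∃ T : Finset (Fin n), sqMonomial kk (Tᶜ) ∉ I ∧ p = sqMonomial kk T }

/- ## Part 2: projective dimension of `S/I`, cohomological dimension, depth, `S_2`, height -/

/-- The `i`-th term of the Koszul complex with coefficients in `S ⧸ I`. -/
abbrev QModule (kk : Type) [Field kk] (n : ℕ) (I : Ideal (MvPolynomial (Fin n) kk))
    (i : ℕ) : Type :=
  {T : Finset (Fin n) // T.card = i} → (MvPolynomial (Fin n) kk ⧸ I)

/-- The Koszul differential on `S ⧸ I` coefficients. -/
noncomputable def DmapQ (kk : Type) [Field kk] (n : ℕ)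
    (I : Ideal (MvPolynomial (Fin n) kk)) (m : ℕ) :
    QModule kk n I (m + 1) →ₗ[kk] QModule kk n I m where
  toFun f T := ∑ t ∈ (T.1ᶜ).attach,
    ((-1 : kk) ^ ((T.1.filter (fun s => s < t.1)).card)) •
      (Ideal.Quotient.mk I (X t.1) * f ⟨insert t.1 T.1, by
        rw [Finset.card_insert_of_notMem (Finset.mem_compl.mp t.2), T.2]⟩)
  map_add' f g := by
    funext T
    simp [mul_add, smul_add, Finset.sum_add_distrib]
  map_smul' c f := by
    funext T
    dsimp only [RingHom.id_apply, Pi.smul_apply]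
    rw [Finset.smul_sum]
    refine Finset.sum_congr rfl fun t _ => ?_
    rw [mul_smul_comm, smul_comm]

/-- The Koszul differential on `S ⧸ I` out of homological degree `i`. -/
noncomputable def DoutQ (kk : Type) [Field kk] (n : ℕ)
    (I : Ideal (MvPolynomial (Fin n) kk)) :
    (i : ℕ) → (QModule kk n I i →ₗ[kk] QModule kk n I (i - 1))
  | 0 => 0
  | (m + 1) => DmapQ kk n I m

/-- The degree-`m` graded piece of `S ⧸ I` (zero in negative degrees). -/
noncomputable def gradedPieceQ {kk : Type} [Field kk] {n : ℕ}
    (I : Ideal (MvPolynomial (Fin n) kk)) (m : ℤ) :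
    Submodule kk (MvPolynomial (Fin n) kk ⧸ I) :=
  if m < 0 then ⊥
  else (homogeneousSubmodule (Fin n) kk m.toNat).map (Ideal.Quotient.mkₐ kk I).toLinearMap

/-- The degree-`j` strand of the Koszul complex of `S ⧸ I` in homological degree `i`. -/
noncomputable def koszulStrandQ {kk : Type} [Field kk] {n : ℕ}
    (I : Ideal (MvPolynomial (Fin n) kk)) (i : ℕ) (j : ℤ) :
    Submodule kk (QModule kk n I i) :=
  Submodule.pi Set.univ (fun _ => gradedPieceQ I (j - i))

/-- `TorNonzeroQ I i j` states that `Tor_i^S(S/I, k)_j ≠ 0`. -/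
noncomputable def TorNonzeroQ {kk : Type} [Field kk] {n : ℕ}
    (I : Ideal (MvPolynomial (Fin n) kk)) (i : ℕ) (j : ℤ) : Prop :=
  ¬ ((koszulStrandQ I i j ⊓ LinearMap.ker (DoutQ kk n I i)) ≤
      Submodule.map (DmapQ kk n I i) (koszulStrandQ I (i + 1) j))

/-- The projective dimension of `S ⧸ I` over `S = k[x_1,…,x_n]`, via the characterization
`pd(S/I) = max { i : Tor_i^S(S/I, k) ≠ 0 }` by minimal graded free resolutions. -/
noncomputable def projdimQuot {kk : Type} [Field kk] {n : ℕ}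
    (I : Ideal (MvPolynomial (Fin n) kk)) : ℕ :=
  sSup { i : ℕ | ∃ j : ℤ, TorNonzeroQ I i j }

/-- The cohomological dimension `cd(R, J)`: the supremum of the `i` such that the local
cohomology `H_J^i(M)` is nonzero for some `R`-module `M`. -/
noncomputable def cohomologicalDimension (R : Type) [CommRing R] (J : Ideal R) : ℕ :=
  sSup { i : ℕ | ∃ M : ModuleCat R, Nontrivial ((localCohomology J i).obj M) }

/-- `depthGE R J t` : the ideal `J` contains a regular sequence on `R` of length `t`,
i.e. `depth(J, R) ≥ t`. -/
def depthGE (R : Type) [CommRing R] (J : Ideal R) (t : ℕ) : Prop :=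
  ∃ rs : List R, rs.length = t ∧ (∀ r ∈ rs, r ∈ J) ∧ RingTheory.Sequence.IsRegular R rs

/-- Serre's condition `(S_2)` for a commutative ring `R`:
`depth R_p ≥ min(2, dim R_p)` for every prime `p`. -/
def SerreS2 (R : Type) [CommRing R] : Prop :=
  ∀ p : Ideal R, ∀ _ : p.IsPrime,
    ∀ t : ℕ, (t : WithBot ℕ∞) ≤ min 2 (ringKrullDim (Localization.AtPrime p)) →
      depthGE (Localization.AtPrime p)
        (IsLocalRing.maximalIdeal (Localization.AtPrime p)) t

/-- The height of an ideal: the infimum of the heights of the primes containing it. -/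
noncomputable def idealHeight {R : Type} [CommRing R] (I : Ideal R) : ℕ∞ :=
  ⨅ p : { p : PrimeSpectrum R // I ≤ p.asIdeal }, Order.height p.1

/-- The numerical function `f(n,d)` of the paper:
`f(n,d) = 0` if `n < d`, `f(d,d) = d`, and `f(n,d) = ⌊(d-1)n/(d+1)⌋ + 1` for `n > d`. -/
def fval (n d : ℕ) : ℕ :=
  if n < d then 0 else if n = d then d else (d - 1) * n / (d + 1) + 1

/-- The numerical function `g(n,d) = n - ⌊n/(d+1)⌋ - ⌊(n-1)/(d+1)⌋` of the paper. -/
def gval (n d : ℕ) : ℕ := n - n / (d + 1) - (n - 1) / (d + 1)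

/-- `I` is a homogeneous ideal: it is stable under taking homogeneous components. -/
def IsHomog {kk : Type} [Field kk] {n : ℕ} (I : Ideal (MvPolynomial (Fin n) kk)) : Prop :=
  ∀ p ∈ I, ∀ i : ℕ, homogeneousComponent i p ∈ I


/-!
The Koszul complex computes `Tor_1^S(I, k)` one multidegree `b` at a time. In multidegree `b` a
1-chain is a coefficient vector `v` supported on the variables `x_t` with `x^b / x_t ∈ I`; it is a
cycle iff `∑ v = 0`, and the boundaries are spanned by the vectors `e_s - e_t` for the edges of the
graph `Γ_b = varGraph I b`, in which `s` and `t` are adjacent when `x_s x_t ∣ x^b` and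
`x^b / (x_s x_t) ∈ I`. So `Tor_1(I)_b` is the reduced `H_0` of `Γ_b`, and since `Tor_0(I)` lives in
degree `d`, property `N_2` says that every `Γ_b` with `deg b ≥ d + 2` is connected.

This is equivalent to the connectedness of all `G_I(u, v)`. Two generators adjacent in `G_I` have an
lcm of degree `d + 1`, so inside `x^b` they share a free variable, which turns a path in `G_I(u, v)`
into a path in `Γ_b`. Conversely, by induction on `deg b`, all generators dividing `x^b / x_t` are
connected, and an edge `s - t` of `Γ_b` links the generators dividing `x^b / x_s` with those
dividing `x^b / x_t` through a generator dividing `x^b / (x_s x_t)`.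
-/

open MvPolynomial Finsupp

namespace Finsupp

variable {σ : Type*}

theorem eq_of_le_of_degree_le {a b : σ →₀ ℕ} (h : a ≤ b) (hd : b.degree ≤ a.degree) :
    a = b := by
  obtain ⟨c, rfl⟩ := le_iff_exists_add.mp h
  have : c.degree = 0 := by rw [map_add] at hd; omega
  rw [(degree_eq_zero_iff c).mp this, add_zero]

theorem exists_add_single_le {a b : σ →₀ ℕ} (h : a ≤ b) (hd : a.degree < b.degree) :
    ∃ r, a + single r 1 ≤ b := by
  obtain ⟨r, hr⟩ : (b - a).support.Nonempty := by
    rw [Finset.nonempty_iff_ne_empty, Ne, support_eq_empty, tsub_eq_zero_iff_le]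
    exact fun hba => hd.ne (by rw [le_antisymm h hba])
  refine ⟨r, ?_⟩
  calc a + single r 1 ≤ a + (b - a) := (add_le_add_iff_left a).mpr
        (single_le_iff.mpr (Nat.one_le_iff_ne_zero.mpr (mem_support_iff.mp hr)))
    _ = b := add_tsub_cancel_of_le h

theorem degree_tsub_single_add_one {b : σ →₀ ℕ} {t : σ} (h : single t 1 ≤ b) :
    (b - single t 1).degree + 1 = b.degree := by
  simpa using congrArg degree (tsub_add_cancel_of_le h)

theorem add_single_add_single_le [DecidableEq σ] {w b : σ →₀ ℕ} {s t : σ} (hst : s ≠ t)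
    (hs : w + single s 1 ≤ b) (ht : w + single t 1 ≤ b) :
    w + (single s 1 + single t 1) ≤ b := by
  intro i
  have hsi := hs i
  have hti := ht i
  by_cases his : s = i <;> by_cases hit : t = i <;> subst_vars <;> simp_all

end Finsupp

namespace MvPolynomial

variable {σ R : Type*} [CommSemiring R]

theorem monomial_mem_of_le {I : Ideal (MvPolynomial σ R)} {a c : σ →₀ ℕ}
    (ha : monomial a (1 : R) ∈ I) (h : a ≤ c) (r : R) : monomial c r ∈ I := by
  rw [← tsub_add_cancel_of_le h, ← mul_one r, ← monomial_mul]
  exact I.mul_mem_left _ ha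

theorem IsHomogeneous.degree_eq_of_mem_support {p : MvPolynomial σ R} {m : ℕ}
    (hp : p.IsHomogeneous m) {c : σ →₀ ℕ} (hc : c ∈ p.support) : c.degree = m := by
  by_contra h
  exact mem_support_iff.mp hc (hp.coeff_eq_zero h)

theorem X_mul_monomial_tsub_single {c : σ →₀ ℕ} {t : σ} (h : single t 1 ≤ c) (r : R) :
    X t * monomial (c - single t 1) r = monomial c r := by
  rw [X, monomial_mul, one_mul, add_tsub_cancel_of_le h]

theorem exists_eq_single_add_of_mem_support_X_mul {p : MvPolynomial σ R} {t : σ}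
    {b : σ →₀ ℕ} (hb : b ∈ (X t * p).support) : ∃ c ∈ p.support, b = single t 1 + c := by
  rw [support_X_mul, Finset.mem_map] at hb
  obtain ⟨c, hc, rfl⟩ := hb
  exact ⟨c, hc, rfl⟩

end MvPolynomial

namespace SimpleGraph

theorem Reachable.single_sub_single_mem_span {V K : Type*} [DecidableEq V]
    [CommRing K] {G : SimpleGraph V} {s t : V} (h : G.Reachable s t) :
    (Pi.single s 1 - Pi.single t 1 : V → K) ∈
      Submodule.span K (Set.range fun e : G.Dart => Pi.single e.fst 1 - Pi.single e.snd 1) := by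
  rw [reachable_iff_reflTransGen] at h
  induction h with
  | refl => rw [sub_self]; exact zero_mem _
  | @tail m t _ hmt ih =>
    rw [← sub_add_sub_cancel _ (Pi.single m 1)]
    exact add_mem ih (Submodule.subset_span ⟨⟨(m, t), hmt⟩, rfl⟩)

theorem mem_span_dart_of_sum_eq_zero {V K : Type*} [Fintype V] [DecidableEq V]
    [CommRing K] (G : SimpleGraph V) {c : V → K} (hsum : ∑ v, c v = 0)
    (hc : ∀ s t, c s ≠ 0 → c t ≠ 0 → G.Reachable s t) :
    c ∈ Submodule.span K (Set.range fun e : G.Dart => Pi.single e.fst 1 - Pi.single e.snd 1) := by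
  obtain hc0 | ⟨t₀, ht₀⟩ := forall_or_exists_not (fun v => c v = 0)
  · rw [show c = 0 from funext hc0]
    exact zero_mem _
  have hdecomp : c = ∑ v, c v • (Pi.single v (1 : K) - Pi.single t₀ 1) := by
    simp only [smul_sub, Finset.sum_sub_distrib, ← Finset.sum_smul, hsum, zero_smul, sub_zero]
    funext v
    simp [Finset.sum_apply, Pi.single_apply]
  rw [hdecomp]
  refine Submodule.sum_mem _ fun v _ => ?_
  by_cases hv : c v = 0
  · rw [hv, zero_smul]; exact zero_mem _
  · exact Submodule.smul_mem _ _ (Reachable.single_sub_single_mem_span (hc v t₀ hv ht₀))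

end SimpleGraph

section VarGraph

variable {σ R : Type*} [CommSemiring R]

def varGraph (I : Ideal (MvPolynomial σ R)) (b : σ →₀ ℕ) : SimpleGraph σ where
  Adj s t := s ≠ t ∧ single s 1 + single t 1 ≤ b ∧
    monomial (b - (single s 1 + single t 1)) (1 : R) ∈ I
  symm := ⟨fun s t h => by rw [add_comm] at h; exact ⟨h.1.symm, h.2⟩⟩
  loopless := ⟨fun _ h => h.1 rfl⟩

def varGraphVerts (I : Ideal (MvPolynomial σ R)) (b : σ →₀ ℕ) : Set σ :=
  {t | single t 1 ≤ b ∧ monomial (b - single t 1) (1 : R) ∈ I}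

def VarGraphsConnected (I : Ideal (MvPolynomial σ R)) (d : ℕ) : Prop :=
  ∀ b : σ →₀ ℕ, d + 2 ≤ b.degree →
    ∀ s ∈ varGraphVerts I b, ∀ t ∈ varGraphVerts I b, (varGraph I b).Reachable s t

variable {I : Ideal (MvPolynomial σ R)} {b : σ →₀ ℕ}

theorem varGraph_adj {s t : σ} :
    (varGraph I b).Adj s t ↔ s ≠ t ∧ single s 1 + single t 1 ≤ b ∧
      monomial (b - (single s 1 + single t 1)) (1 : R) ∈ I :=
  Iff.rfl

theorem varGraph_reachable_of_add_single_le {w : σ →₀ ℕ} (hw : monomial w (1 : R) ∈ I)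
    {s t : σ} (hs : w + single s 1 ≤ b) (ht : w + single t 1 ≤ b) :
    (varGraph I b).Reachable s t := by
  classical
  obtain rfl | hst := eq_or_ne s t
  · rfl
  have hwst := add_single_add_single_le hst hs ht
  exact SimpleGraph.Adj.reachable <| varGraph_adj.mpr
    ⟨hst, le_add_self.trans hwst, monomial_mem_of_le hw (le_tsub_of_add_le_right hwst) 1⟩

end VarGraph

section

variable {kk : Type} [Field kk] {n d : ℕ} {I : Ideal (MvPolynomial (Fin n) kk)}
  {b : Fin n →₀ ℕ}

theorem degExp_eq_degree (a : Fin n →₀ ℕ) : degExp a = a.degree := rfl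

theorem IsMonomialIdeal.monomial_mem_of_mem_support (hmon : IsMonomialIdeal I)
    {p : MvPolynomial (Fin n) kk} (hp : p ∈ I) {c : Fin n →₀ ℕ} (hc : c ∈ p.support) :
    monomial c (1 : kk) ∈ I := by
  obtain ⟨A, rfl⟩ := hmon
  obtain ⟨a, haA, hac⟩ := mem_ideal_span_monomial_image.mp hp c hc
  have ha : monomial a (1 : kk) ∈ Ideal.span ((fun a => monomial a (1 : kk)) '' A) :=
    Ideal.subset_span (Set.mem_image_of_mem _ haA)
  exact monomial_mem_of_le ha hac 1

theorem exists_isMinGen_le {c : Fin n →₀ ℕ} (hc : monomial c (1 : kk) ∈ I) :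
    ∃ a, IsMinGen I a ∧ a ≤ c := by
  obtain ⟨a, ⟨haI, hac⟩, hmin⟩ := wellFounded_lt.has_min
    {a : Fin n →₀ ℕ | monomial a (1 : kk) ∈ I ∧ a ≤ c} ⟨c, hc, le_rfl⟩
  exact ⟨a, And.intro haI fun a' ha' ha'I => ha'.eq_of_not_lt (hmin a' ⟨ha'I, ha'.trans hac⟩),
    hac⟩

theorem le_degree_of_monomial_mem (hdeg : ∀ a, IsMinGen I a → degExp a = d)
    {c : Fin n →₀ ℕ} (hc : monomial c (1 : kk) ∈ I) : d ≤ c.degree := by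
  obtain ⟨a, ha, hac⟩ := exists_isMinGen_le hc
  exact hdeg a ha ▸ degree_mono hac

theorem exists_add_single_le_of_genGraph_adj {x y : Fin n →₀ ℕ} (hxy : (genGraph I d).Adj x y)
    (hle : x ⊔ y ≤ b) (hb : d + 2 ≤ b.degree) :
    ∃ r, x + single r 1 ≤ b ∧ y + single r 1 ≤ b := by
  obtain ⟨r, hr⟩ := exists_add_single_le hle (by rw [← degExp_eq_degree, hxy.2.2.2]; omega)
  exact ⟨r, le_trans (by gcongr; exact le_sup_left) hr,
    le_trans (by gcongr; exact le_sup_right) hr⟩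

theorem varGraph_reachable_of_induce_reachable (hb : d + 2 ≤ b.degree)
    {S : Set (Fin n →₀ ℕ)} (hS : ∀ w ∈ S, monomial w (1 : kk) ∈ I ∧ w ≤ b) {x y : S}
    (hxy : ((genGraph I d).induce S).Reachable x y) {r r' : Fin n}
    (hr : x.1 + single r 1 ≤ b) (hr' : y.1 + single r' 1 ≤ b) :
    (varGraph I b).Reachable r r' := by
  rw [SimpleGraph.reachable_iff_reflTransGen] at hxy
  induction hxy using Relation.ReflTransGen.head_induction_on generalizing r with
  | refl => exact varGraph_reachable_of_add_single_le (hS _ y.2).1 hr hr'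
  | @head x z hadj _ ih =>
    obtain ⟨q, hxq, hzq⟩ := exists_add_single_le_of_genGraph_adj hadj
      (sup_le (hS _ x.2).2 (hS _ z.2).2) hb
    exact (varGraph_reachable_of_add_single_le (hS _ x.2).1 hr hxq).trans (ih hzq)

theorem varGraphsConnected_of_giConnected
    (hconn : ∀ u v, IsMinGen I u → IsMinGen I v → GIConnected I d u v) :
    VarGraphsConnected I d := by
  intro b hb s ⟨hs, hsI⟩ t ⟨ht, htI⟩
  obtain ⟨u, hu, hus⟩ := exists_isMinGen_le hsI
  obtain ⟨v, hv, hvt⟩ := exists_isMinGen_le htI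
  have husb : u + single s 1 ≤ b := add_le_of_le_tsub_right_of_le hs hus
  have hvtb : v + single t 1 ≤ b := add_le_of_le_tsub_right_of_le ht hvt
  have huvb : u ⊔ v ≤ b := sup_le (le_self_add.trans husb) (le_self_add.trans hvtb)
  exact varGraph_reachable_of_induce_reachable (S := {w | IsMinGen I w ∧ w ≤ u ⊔ v})
    (x := ⟨u, hu, le_sup_left⟩) (y := ⟨v, hv, le_sup_right⟩) hb
    (fun w hw => ⟨hw.1.1, hw.2.trans huvb⟩) ((hconn u v hu hv).preconnected _ _) husb hvtb

theorem induce_preconnected_of_degree_le (hdeg : ∀ a, IsMinGen I a → degExp a = d)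
    (hb : b.degree ≤ d + 1) :
    ((genGraph I d).induce {w | IsMinGen I w ∧ w ≤ b}).Preconnected := by
  rintro ⟨x, hx, hxb⟩ ⟨y, hy, hyb⟩
  obtain rfl | hxy := eq_or_ne x y
  · rfl
  have hdx : x.degree = d := hdeg x hx
  have hdy : y.degree = d := hdeg y hy
  have hsup : degExp (x ⊔ y) = d + 1 := by
    refine le_antisymm ((degree_mono (sup_le hxb hyb)).trans hb) (Nat.succ_le_of_lt ?_)
    refine hdx ▸ (degree_mono le_sup_left).lt_of_ne fun h => hxy ?_
    exact (eq_of_le_of_degree_le le_sup_left h.ge).trans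
      (eq_of_le_of_degree_le le_sup_right (by omega)).symm
  exact SimpleGraph.Adj.reachable (G := (genGraph I d).induce _)
    (show (genGraph I d).Adj x y from ⟨hx, hy, hxy, hsup⟩)

theorem induce_preconnected_of_tsub_single (HG : VarGraphsConnected I d)
    (hdeg : ∀ a, IsMinGen I a → degExp a = d) (hb : d + 2 ≤ b.degree)
    (hbelow : ∀ t, single t 1 ≤ b →
      ((genGraph I d).induce {w | IsMinGen I w ∧ w ≤ b - single t 1}).Preconnected) :
    ((genGraph I d).induce {w | IsMinGen I w ∧ w ≤ b}).Preconnected := by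
  set G := (genGraph I d).induce {w | IsMinGen I w ∧ w ≤ b}
  have share : ∀ (z z' : {w | IsMinGen I w ∧ w ≤ b}) (t : Fin n),
      z.1 + single t 1 ≤ b → z'.1 + single t 1 ≤ b → G.Reachable z z' := by
    intro z z' t hz hz'
    have hsub := hbelow t (le_add_self.trans hz) ⟨z, z.2.1, le_tsub_of_add_le_right hz⟩
      ⟨z', z'.2.1, le_tsub_of_add_le_right hz'⟩
    exact hsub.map
      ((genGraph I d).induceHomOfLE fun _ hw => And.intro hw.1 (hw.2.trans tsub_le_self)).toHom
  have free_var : ∀ z : {w | IsMinGen I w ∧ w ≤ b}, ∃ r, z.1 + single r 1 ≤ b := fun z =>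
    exists_add_single_le z.2.2 (by rw [← degExp_eq_degree, hdeg z z.2.1]; omega)
  have vert : ∀ (z : {w | IsMinGen I w ∧ w ≤ b}) r, z.1 + single r 1 ≤ b →
      r ∈ varGraphVerts I b := fun z r hr =>
    ⟨le_add_self.trans hr, monomial_mem_of_le z.2.1.1 (le_tsub_of_add_le_right hr) 1⟩
  intro x y
  obtain ⟨r, hr⟩ := free_var x
  obtain ⟨r', hr'⟩ := free_var y
  suffices H : ∀ s, (varGraph I b).Reachable r s →
      ∀ z : {w | IsMinGen I w ∧ w ≤ b}, z.1 + single s 1 ≤ b → G.Reachable x z from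
    H r' (HG b hb r (vert x r hr) r' (vert y r' hr')) y hr'
  intro s hs
  rw [SimpleGraph.reachable_iff_reflTransGen] at hs
  induction hs with
  | refl => exact fun z hz => share x z r hr hz
  | @tail s t _ hst ih =>
    obtain ⟨-, hle, hmem⟩ := varGraph_adj.mp hst
    obtain ⟨m, hm, hmle⟩ := exists_isMinGen_le hmem
    have hmst : m + (single s 1 + single t 1) ≤ b := add_le_of_le_tsub_right_of_le hle hmle
    have hms : m + single s 1 ≤ b := le_trans (by gcongr; exact le_self_add) hmst
    have hmt : m + single t 1 ≤ b := le_trans (by gcongr; exact le_add_self) hmst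
    have hmb : m ≤ b := le_self_add.trans hms
    exact fun z hz => (ih ⟨m, hm, hmb⟩ hms).trans (share ⟨m, hm, hmb⟩ z t hmt hz)

theorem induce_preconnected_of_varGraphsConnected (HG : VarGraphsConnected I d)
    (hdeg : ∀ a, IsMinGen I a → degExp a = d) (b : Fin n →₀ ℕ) :
    ((genGraph I d).induce {w | IsMinGen I w ∧ w ≤ b}).Preconnected := by
  induction hN : b.degree using Nat.strong_induction_on generalizing b with
  | _ N ih =>
    by_cases hb : b.degree ≤ d + 1
    · exact induce_preconnected_of_degree_le hdeg hb
    refine induce_preconnected_of_tsub_single HG hdeg (by omega) fun t ht => ?_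
    exact ih _ (by rw [← hN, ← degree_tsub_single_add_one ht]; omega) _ rfl

theorem giConnected_of_varGraphsConnected (HG : VarGraphsConnected I d)
    (hdeg : ∀ a, IsMinGen I a → degExp a = d) {u : Fin n →₀ ℕ} (hu : IsMinGen I u)
    (v : Fin n →₀ ℕ) : GIConnected I d u v :=
  (SimpleGraph.connected_iff _).mpr
    ⟨induce_preconnected_of_varGraphsConnected HG hdeg _, ⟨⟨u, hu, le_sup_left⟩⟩⟩

def oneSubset (t : Fin n) : {T : Finset (Fin n) // T.card = 1} :=
  ⟨{t}, Finset.card_singleton t⟩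

theorem oneSubset_injective : Function.Injective (oneSubset (n := n)) :=
  fun _ _ h => Finset.singleton_injective (congrArg Subtype.val h)

theorem exists_eq_oneSubset (T : {T : Finset (Fin n) // T.card = 1}) :
    ∃ t, T = oneSubset t := by
  obtain ⟨t, ht⟩ := Finset.card_eq_one.mp T.2
  exact ⟨t, Subtype.ext ht⟩

def twoSubset {s t : Fin n} (h : s ≠ t) : {T : Finset (Fin n) // T.card = 2} :=
  ⟨{s, t}, Finset.card_pair h⟩

theorem exists_eq_twoSubset (U : {T : Finset (Fin n) // T.card = 2}) :
    ∃ s t, ∃ h : s < t, U = twoSubset h.ne := by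
  obtain ⟨s, t, hst, hU⟩ := Finset.card_eq_two.mp U.2
  rcases hst.lt_or_gt with h | h
  · exact ⟨s, t, h, Subtype.ext hU⟩
  · exact ⟨t, s, h, Subtype.ext (hU.trans (Finset.pair_comm s t))⟩

theorem dmap_zero_apply (f : KModule kk n 1) (T : {T : Finset (Fin n) // T.card = 0}) :
    Dmap kk n 0 f T = ∑ t, X t * f (oneSubset t) := by
  obtain ⟨T, hT⟩ := T
  obtain rfl := Finset.card_eq_zero.mp hT
  simp only [Dmap, LinearMap.coe_mk, AddHom.coe_mk, Finset.filter_empty, Finset.card_empty,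
    pow_zero, one_smul]
  exact Finset.sum_attach Finset.univ fun t => X t * f (oneSubset t)

theorem dmap_zero_single (t : Fin n) (p : MvPolynomial (Fin n) kk) :
    Dmap kk n 0 (Pi.single (oneSubset t) p) = fun _ => X t * p := by
  funext T
  rw [dmap_zero_apply, Finset.sum_eq_single t]
  · simp
  · intro r _ hrt
    rw [Pi.single_eq_of_ne (oneSubset_injective.ne hrt), mul_zero]
  · simp

theorem dmap_one_single_twoSubset {s t : Fin n} (h : s < t) (p : MvPolynomial (Fin n) kk) :
    Dmap kk n 1 (Pi.single (twoSubset h.ne) p) =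
      Pi.single (oneSubset t) (X s * p) - Pi.single (oneSubset s) (X t * p) := by
  funext T
  obtain ⟨r, rfl⟩ := exists_eq_oneSubset T
  have hpair : ∀ x, ({x, r} : Finset _) = {s, t} ↔ x = s ∧ r = t ∨ x = t ∧ r = s := by
    intro x
    rw [← Finset.coe_inj, Finset.coe_pair, Finset.coe_pair]
    exact Set.pair_eq_pair_iff
  simp only [Dmap, LinearMap.coe_mk, AddHom.coe_mk, Pi.sub_apply, Pi.single_apply, twoSubset,
    oneSubset, Subtype.ext_iff, hpair, Finset.singleton_inj, Finset.filter_singleton]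
  obtain rfl | hrt := eq_or_ne r t
  · rw [Finset.sum_eq_single_of_mem ⟨s, by simpa using h.ne⟩ (Finset.mem_attach _ _)]
    · simp [h.ne, h.ne', not_lt_of_gt h]
    · rintro ⟨x, hx⟩ _ hxs
      simp_all [Subtype.ext_iff, h.ne']
  obtain rfl | hrs := eq_or_ne r s
  · rw [Finset.sum_eq_single_of_mem ⟨t, by simpa using h.ne'⟩ (Finset.mem_attach _ _)]
    · simp [h, h.ne, h.ne']
    · rintro ⟨x, hx⟩ _ hxt
      simp_all [Subtype.ext_iff]
  · simp [hrt, hrs]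

theorem mem_gradedPiece_iff {m : ℕ} {j : ℤ} (hj : (m : ℤ) = j) {p : MvPolynomial (Fin n) kk} :
    p ∈ gradedPiece I j ↔ p ∈ I ∧ p.IsHomogeneous m := by
  rw [gradedPiece, if_neg (by omega), ← hj, Int.toNat_natCast]
  exact Iff.rfl

theorem mem_of_mem_gradedPiece {j : ℤ} {p : MvPolynomial (Fin n) kk}
    (hp : p ∈ gradedPiece I j) : p ∈ I := by
  rw [gradedPiece] at hp
  split_ifs at hp
  · rw [(Submodule.mem_bot kk).mp hp]
    exact zero_mem I
  · exact hp.1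

theorem gradedPiece_eq_bot_of_lt (hmon : IsMonomialIdeal I)
    (hdeg : ∀ a, IsMinGen I a → degExp a = d) {j : ℤ} (hj : j < d) :
    gradedPiece I j = ⊥ := by
  rcases lt_or_ge j 0 with hneg | hpos
  · exact if_pos hneg
  refine eq_bot_iff.mpr fun p hp => (Submodule.mem_bot kk).mpr ?_
  obtain ⟨hpI, hphom⟩ := (mem_gradedPiece_iff (Int.toNat_of_nonneg hpos)).mp hp
  refine support_eq_empty.mp (Finset.eq_empty_of_forall_notMem fun c hc => ?_)
  have hcd := le_degree_of_monomial_mem hdeg (hmon.monomial_mem_of_mem_support hpI hc)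
  have hcj := hphom.degree_eq_of_mem_support hc
  omega

theorem monomial_mem_gradedPiece {c : Fin n →₀ ℕ} (hc : monomial c (1 : kk) ∈ I) {j : ℤ}
    (hj : (c.degree : ℤ) = j) (κ : kk) : monomial c κ ∈ gradedPiece I j :=
  (mem_gradedPiece_iff hj).mpr ⟨monomial_mem_of_le hc le_rfl κ, isHomogeneous_monomial κ rfl⟩

theorem mem_koszulStrand_iff {i : ℕ} {j : ℤ} {x : KModule kk n i} :
    x ∈ koszulStrand I i j ↔ ∀ T, x T ∈ gradedPiece I (j - i) := by
  simp [koszulStrand, Submodule.mem_pi]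

theorem single_mem_koszulStrand {i : ℕ} {j : ℤ} (T : {T : Finset (Fin n) // T.card = i})
    {p : MvPolynomial (Fin n) kk} (hp : p ∈ gradedPiece I (j - i)) :
    Pi.single T p ∈ koszulStrand I i j := by
  classical
  refine mem_koszulStrand_iff.mpr fun U => ?_
  rw [Pi.single_apply]
  split_ifs
  · exact hp
  · exact zero_mem _

theorem const_monomial_mem_map_dmap_zero (hdeg : ∀ a, IsMinGen I a → degExp a = d)
    {c : Fin n →₀ ℕ} (hc : monomial c (1 : kk) ∈ I) {j : ℤ} (hcj : (c.degree : ℤ) = j)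
    (hjd : d < j) (κ : kk) :
    (fun _ => monomial c κ) ∈ (koszulStrand I 1 j).map (Dmap kk n 0) := by
  obtain ⟨u, hu, huc⟩ := exists_isMinGen_le hc
  obtain ⟨r, hr⟩ := exists_add_single_le huc (by rw [← degExp_eq_degree, hdeg u hu]; omega)
  have hrc : single r 1 ≤ c := le_add_self.trans hr
  refine ⟨Pi.single (oneSubset r) (monomial (c - single r 1) κ), single_mem_koszulStrand _
    (monomial_mem_gradedPiece (monomial_mem_of_le hu.1 (le_tsub_of_add_le_right hr) 1) ?_ κ), ?_⟩
  · rw [← hcj, ← degree_tsub_single_add_one hrc]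
    push_cast
    ring
  · rw [dmap_zero_single, X_mul_monomial_tsub_single hrc]

theorem not_torNonzero_zero (hmon : IsMonomialIdeal I) (hdeg : ∀ a, IsMinGen I a → degExp a = d)
    {j : ℤ} (hj : j ≠ d) : ¬TorNonzero I 0 j := by
  rw [TorNonzero, not_not]
  rintro x ⟨hx, -⟩
  have hx0 : x = fun _ => x ⟨∅, Finset.card_empty⟩ := by
    funext ⟨T, hT⟩
    obtain rfl := Finset.card_eq_zero.mp hT
    rfl
  have hp : x ⟨∅, Finset.card_empty⟩ ∈ gradedPiece I j := by
    simpa using mem_koszulStrand_iff.mp hx ⟨∅, Finset.card_empty⟩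
  set p := x ⟨∅, Finset.card_empty⟩
  rcases hj.lt_or_gt with hlt | hgt
  · rw [gradedPiece_eq_bot_of_lt hmon hdeg hlt, Submodule.mem_bot] at hp
    rw [hx0, hp]
    exact zero_mem _
  obtain ⟨hpI, hphom⟩ := (mem_gradedPiece_iff (Int.toNat_of_nonneg (by omega))).mp hp
  rw [hx0, ← support_sum_monomial_coeff p, ← Finset.sum_fn]
  refine Submodule.sum_mem _ fun c hc => const_monomial_mem_map_dmap_zero hdeg
    (hmon.monomial_mem_of_mem_support hpI hc) ?_ hgt _
  rw [hphom.degree_eq_of_mem_support hc]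
  omega

noncomputable def monomialVec (b : Fin n →₀ ℕ) : (Fin n → kk) →ₗ[kk] KModule kk n 1 :=
  ∑ t, LinearMap.single kk (fun _ => MvPolynomial (Fin n) kk) (oneSubset t) ∘ₗ
    monomial (b - single t 1) ∘ₗ LinearMap.proj t

theorem monomialVec_apply (b : Fin n →₀ ℕ) (v : Fin n → kk) :
    monomialVec b v = ∑ t, Pi.single (oneSubset t) (monomial (b - single t 1) (v t)) := by
  simp [monomialVec]

theorem monomialVec_apply_oneSubset (b : Fin n →₀ ℕ) (v : Fin n → kk) (t : Fin n) :
    monomialVec b v (oneSubset t) = monomial (b - single t 1) (v t) := by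
  classical
  rw [monomialVec_apply, Finset.sum_apply, Finset.sum_eq_single t]
  · simp
  · intro r _ hrt
    rw [Pi.single_eq_of_ne (oneSubset_injective.ne hrt.symm)]
  · simp

theorem monomialVec_single (b : Fin n →₀ ℕ) (s : Fin n) :
    monomialVec b (Pi.single s (1 : kk)) =
      Pi.single (oneSubset s) (monomial (b - single s 1) 1) := by
  classical
  rw [monomialVec_apply, Finset.sum_eq_single s]
  · simp
  · intro r _ hrs
    rw [Pi.single_eq_of_ne hrs, monomial_zero, Pi.single_zero]
  · simp

theorem monomialVec_mem_koszulStrand {v : Fin n → kk} (hv : ∀ t, v t ≠ 0 → t ∈ varGraphVerts I b) :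
    monomialVec b v ∈ koszulStrand I 1 b.degree := by
  refine mem_koszulStrand_iff.mpr fun T => ?_
  obtain ⟨t, rfl⟩ := exists_eq_oneSubset T
  rw [monomialVec_apply_oneSubset]
  by_cases ht : v t = 0
  · rw [ht, monomial_zero]
    exact zero_mem _
  obtain ⟨hle, hmem⟩ := hv t ht
  refine monomial_mem_gradedPiece hmem ?_ _
  rw [← degree_tsub_single_add_one hle]
  push_cast
  ring

theorem dmap_zero_monomialVec {v : Fin n → kk} (hv : ∀ t, v t ≠ 0 → single t 1 ≤ b) :
    Dmap kk n 0 (monomialVec b v) = fun _ => monomial b (∑ t, v t) := by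
  funext T
  rw [dmap_zero_apply, map_sum]
  refine Finset.sum_congr rfl fun t _ => ?_
  rw [monomialVec_apply_oneSubset]
  by_cases ht : v t = 0
  · rw [ht, monomial_zero, monomial_zero, mul_zero]
  · exact X_mul_monomial_tsub_single (hv t ht) _

-- The factor `X t` makes the coordinate vanish by itself when `x_t ∤ x^b`.
noncomputable def coeffVec (f : KModule kk n 1) (b : Fin n →₀ ℕ) : Fin n → kk :=
  fun t => coeff b (X t * f (oneSubset t))

theorem sum_coeffVec_eq_zero {f : KModule kk n 1} (hf : Dmap kk n 0 f = 0) (b : Fin n →₀ ℕ) :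
    ∑ t, coeffVec f b t = 0 := by
  have := congrArg (coeff b) (congrFun hf ⟨∅, Finset.card_empty⟩)
  rwa [dmap_zero_apply, coeff_sum] at this

theorem eq_sum_monomialVec_coeffVec (f : KModule kk n 1) :
    f = ∑ b ∈ Finset.univ.biUnion (fun t => (X t * f (oneSubset t)).support),
      monomialVec b (coeffVec f b) := by
  classical
  funext T
  obtain ⟨p, rfl⟩ := exists_eq_oneSubset T
  simp only [Finset.sum_apply, monomialVec_apply_oneSubset, coeffVec]
  rw [← Finset.sum_subset (Finset.subset_biUnion_of_mem _ (Finset.mem_univ p))]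
  · rw [support_X_mul, Finset.sum_map]
    simp only [addLeftEmbedding_apply, add_tsub_cancel_left, coeff_X_mul]
    exact (support_sum_monomial_coeff _).symm
  · intro b _ hb
    rw [MvPolynomial.notMem_support_iff.mp hb, monomial_zero]

theorem coeffVec_monomialVec {v : Fin n → kk} (hv : ∀ t, v t ≠ 0 → single t 1 ≤ b) :
    coeffVec (monomialVec b v) b = v := by
  funext t
  rw [coeffVec, monomialVec_apply_oneSubset]
  by_cases ht : v t = 0
  · rw [ht, monomial_zero, mul_zero, coeff_zero]
  · rw [X_mul_monomial_tsub_single (hv t ht), coeff_monomial, if_pos rfl]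

theorem mem_varGraphVerts_of_coeffVec_ne_zero (hmon : IsMonomialIdeal I) {f : KModule kk n 1}
    (hfI : ∀ T, f T ∈ I) {t : Fin n} (ht : coeffVec f b t ≠ 0) :
    t ∈ varGraphVerts I b := by
  obtain ⟨c, hc, rfl⟩ :=
    exists_eq_single_add_of_mem_support_X_mul (MvPolynomial.mem_support_iff.mpr ht)
  refine And.intro le_self_add ?_
  rw [add_tsub_cancel_left]
  exact hmon.monomial_mem_of_mem_support (hfI _) hc

theorem monomialVec_single_sub_single_mem_map_dmap_one {s t : Fin n}
    (hst : (varGraph I b).Adj s t) {j : ℤ} (hj : (b.degree : ℤ) = j) :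
    monomialVec b (Pi.single s 1 - Pi.single t 1) ∈
      (koszulStrand I (1 + 1) j).map (Dmap kk n 1) := by
  wlog h : s < t generalizing s t
  · rw [← neg_sub, map_neg]
    exact neg_mem (this hst.symm (hst.ne.symm.lt_of_le (not_lt.mp h)))
  obtain ⟨-, hle, hmem⟩ := varGraph_adj.mp hst
  have hs : single s 1 ≤ b - single t 1 := le_tsub_of_add_le_right hle
  have ht : single t 1 ≤ b - single s 1 := le_tsub_of_add_le_left hle
  refine ⟨Pi.single (twoSubset h.ne) (monomial (b - (single s 1 + single t 1)) (-1)),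
    single_mem_koszulStrand _ (monomial_mem_gradedPiece hmem ?_ _), ?_⟩
  · have := congrArg degree (tsub_add_cancel_of_le hle)
    rw [map_add, map_add, degree_single, degree_single] at this
    push_cast
    omega
  · have hXs : X s * monomial (b - (single s 1 + single t 1)) (-1 : kk) =
        monomial (b - single t 1) (-1) := by
      rw [add_comm, ← tsub_tsub, X_mul_monomial_tsub_single hs]
    have hXt : X t * monomial (b - (single s 1 + single t 1)) (-1 : kk) =
        monomial (b - single s 1) (-1) := by
      rw [← tsub_tsub, X_mul_monomial_tsub_single ht]
    rw [dmap_one_single_twoSubset h, hXs, hXt, map_sub, monomialVec_single, monomialVec_single,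
      map_neg, map_neg, Pi.single_neg, Pi.single_neg]
    abel

theorem not_torNonzero_one (hmon : IsMonomialIdeal I) (hdeg : ∀ a, IsMinGen I a → degExp a = d)
    (HG : VarGraphsConnected I d) {j : ℤ} (hj : j ≠ d + 1) : ¬TorNonzero I 1 j := by
  rw [TorNonzero, not_not]
  rintro f ⟨hf, hfker⟩
  replace hf := mem_koszulStrand_iff.mp hf
  rcases lt_or_ge j (d + 2) with hlt | hge
  · have hf0 : f = 0 := funext fun T => by
      have hfT := hf T
      rwa [gradedPiece_eq_bot_of_lt hmon hdeg (by push_cast; omega), Submodule.mem_bot] at hfT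
    rw [hf0]
    exact zero_mem _
  have hm := Int.toNat_of_nonneg (show 0 ≤ j - (1 : ℕ) by push_cast; omega)
  have hfT := fun T => (mem_gradedPiece_iff hm).mp (hf T)
  rw [eq_sum_monomialVec_coeffVec f]
  refine Submodule.sum_mem _ fun b hb => ?_
  have hbj : (b.degree : ℤ) = j := by
    obtain ⟨t, -, hbt⟩ := Finset.mem_biUnion.mp hb
    obtain ⟨c, hc, rfl⟩ := exists_eq_single_add_of_mem_support_X_mul hbt
    rw [map_add, degree_single, (hfT _).2.degree_eq_of_mem_support hc]
    omega
  have hspan := SimpleGraph.mem_span_dart_of_sum_eq_zero (varGraph I b)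
    (sum_coeffVec_eq_zero hfker b) fun s t hs ht => HG b (by omega) s
      (mem_varGraphVerts_of_coeffVec_ne_zero hmon (fun T => (hfT T).1) hs) t
      (mem_varGraphVerts_of_coeffVec_ne_zero hmon (fun T => (hfT T).1) ht)
  have := Submodule.mem_map_of_mem (f := monomialVec b) hspan
  rw [Submodule.map_span] at this
  refine Submodule.span_le.mpr ?_ this
  rintro _ ⟨_, ⟨e, rfl⟩, rfl⟩
  exact monomialVec_single_sub_single_mem_map_dmap_one e.adj hbj

-- For a union `C` of components of `Γ_b` this form kills all boundaries, but it takes the value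
-- `1` on `e_s - e_t` when `s ∈ C` and `t ∉ C`.
noncomputable def componentSum (C : Finset (Fin n)) (b : Fin n →₀ ℕ) :
    KModule kk n 1 →ₗ[kk] kk :=
  ∑ r ∈ C, lcoeff kk b ∘ₗ LinearMap.mulLeft kk (X r) ∘ₗ LinearMap.proj (oneSubset r)

theorem componentSum_apply (C : Finset (Fin n)) (b : Fin n →₀ ℕ) (f : KModule kk n 1) :
    componentSum C b f = ∑ r ∈ C, coeffVec f b r := by
  simp [componentSum, coeffVec]

theorem componentSum_single_oneSubset (C : Finset (Fin n)) (b : Fin n →₀ ℕ) (r : Fin n)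
    (p : MvPolynomial (Fin n) kk) :
    componentSum C b (Pi.single (oneSubset r) p) = if r ∈ C then coeff b (X r * p) else 0 := by
  classical
  have hvec : coeffVec (Pi.single (oneSubset r) p) b = Pi.single r (coeff b (X r * p)) := by
    funext q
    by_cases hqr : q = r <;> simp [coeffVec, oneSubset_injective.eq_iff, hqr]
  rw [componentSum_apply, hvec, Finset.sum_pi_single']

theorem varGraph_adj_of_coeff_ne_zero (hmon : IsMonomialIdeal I) {p : MvPolynomial (Fin n) kk}
    (hp : p ∈ I) {q r : Fin n} (hqr : q ≠ r) (h : coeff b (X q * (X r * p)) ≠ 0) :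
    (varGraph I b).Adj q r := by
  obtain ⟨c', hc', rfl⟩ :=
    exists_eq_single_add_of_mem_support_X_mul (MvPolynomial.mem_support_iff.mpr h)
  obtain ⟨c, hc, rfl⟩ := exists_eq_single_add_of_mem_support_X_mul hc'
  rw [← add_assoc]
  refine varGraph_adj.mpr ⟨hqr, le_self_add, ?_⟩
  rw [add_tsub_cancel_left]
  exact hmon.monomial_mem_of_mem_support hp hc

theorem componentSum_dmap_eq_zero (hmon : IsMonomialIdeal I)
    {C : Finset (Fin n)} (hC : ∀ q r, (varGraph I b).Adj q r → q ∈ C → r ∈ C)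
    {g : KModule kk n (1 + 1)} (hg : ∀ U, g U ∈ I) : componentSum C b (Dmap kk n 1 g) = 0 := by
  rw [← Finset.univ_sum_single g, map_sum, map_sum]
  refine Finset.sum_eq_zero fun U _ => ?_
  obtain ⟨q, r, hqr, rfl⟩ := exists_eq_twoSubset U
  rw [dmap_one_single_twoSubset hqr, map_sub, componentSum_single_oneSubset,
    componentSum_single_oneSubset, mul_left_comm]
  by_cases h : coeff b (X q * (X r * g (twoSubset hqr.ne))) = 0
  · simp [h]
  have hadj := varGraph_adj_of_coeff_ne_zero hmon (hg _) hqr.ne h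
  have hiff : q ∈ C ↔ r ∈ C := ⟨hC q r hadj, hC r q hadj.symm⟩
  by_cases hq : q ∈ C
  · simp [hq, hiff.mp hq]
  · simp [hq, mt hiff.mpr hq]

theorem torNonzero_one_of_not_reachable (hmon : IsMonomialIdeal I) {s t : Fin n}
    (hs : s ∈ varGraphVerts I b) (ht : t ∈ varGraphVerts I b)
    (hst : ¬(varGraph I b).Reachable s t) : TorNonzero I 1 b.degree := by
  classical
  set v : Fin n → kk := Pi.single s 1 - Pi.single t 1
  have hv : ∀ r, v r ≠ 0 → r ∈ varGraphVerts I b := by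
    intro r hr
    by_cases hrs : r = s
    · exact hrs ▸ hs
    by_cases hrt : r = t
    · exact hrt ▸ ht
    simp [v, hrs, hrt] at hr
  have hvb : ∀ r, v r ≠ 0 → single r 1 ≤ b := fun r hr => (hv r hr).1
  have hcycle : monomialVec b v ∈ LinearMap.ker (Dout kk n 1) := by
    rw [LinearMap.mem_ker]
    change Dmap kk n 0 (monomialVec b v) = 0
    rw [dmap_zero_monomialVec hvb]
    funext
    simp [v]
  set C := Finset.univ.filter ((varGraph I b).Reachable s)
  intro hle
  obtain ⟨g, hg, hgv⟩ := hle ⟨monomialVec_mem_koszulStrand hv, hcycle⟩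
  have hgI : ∀ U, g U ∈ I := fun U => mem_of_mem_gradedPiece (mem_koszulStrand_iff.mp hg U)
  have key := congrArg (componentSum C b) hgv
  rw [componentSum_dmap_eq_zero hmon (fun q r hqr hq => ?_) hgI, componentSum_apply,
    coeffVec_monomialVec hvb] at key
  · simp [v, C, Finset.sum_sub_distrib, Finset.sum_pi_single', hst] at key
  · simp only [C, Finset.mem_filter, Finset.mem_univ, true_and] at hq ⊢
    exact hq.trans hqr.reachable

theorem varGraphsConnected_of_torNonzero_one (hmon : IsMonomialIdeal I)
    (hN : ∀ j : ℤ, TorNonzero I 1 j → j = d + 1) : VarGraphsConnected I d := by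
  intro b hb s hs t ht
  by_contra hst
  have := hN _ (torNonzero_one_of_not_reachable hmon hs ht hst)
  omega

theorem satisfiesN_two_iff (hmon : IsMonomialIdeal I)
    (hdeg : ∀ a, IsMinGen I a → degExp a = d) :
    SatisfiesN I d 2 ↔ ∀ j : ℤ, TorNonzero I 1 j → j = d + 1 := by
  refine ⟨fun h j hj => by exact_mod_cast h 1 one_lt_two j hj, fun h i hi j hj => ?_⟩
  interval_cases i
  · by_contra hne
    exact not_torNonzero_zero hmon hdeg (by simpa using hne) hj
  · exact_mod_cast h j hj

end

/-- **Lemma 2.3.** A monomial ideal `I` generated in degree `d` satisfies property `N_2`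
if and only if the graph `G_I(u,v)` is connected for all minimal generators `u, v` of `I`. -/
theorem satisfiesN2_iff_graphs_connected (kk : Type) [Field kk] (n d : ℕ)
    (I : Ideal (MvPolynomial (Fin n) kk)) (hmon : IsMonomialIdeal I)
    (hdeg : ∀ a : Fin n →₀ ℕ, IsMinGen I a → degExp a = d) :
    SatisfiesN I d 2 ↔
      ∀ u v : Fin n →₀ ℕ, IsMinGen I u → IsMinGen I v → GIConnected I d u v := by
  rw [satisfiesN_two_iff hmon hdeg]
  constructor
  · intro hN u v hu _
    exact giConnected_of_varGraphsConnected (varGraphsConnected_of_torNonzero_one hmon hN) hdeg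
      hu v
  · intro hconn j hj
    by_contra hne
    exact not_torNonzero_one hmon hdeg (varGraphsConnected_of_giConnected hconn) hne hj
end

section
/- Let n and d be positive integers with d ≥ 2 and n ≥ d. Then g(n,d) − 1 ≤ f(n,d) ≤ g(n,d); moreover, f(n,d) = g(n,d) − 1 if and only if n = (d+1)k + s for some integers k ≥ 1 and s with ⌊(d+1)/2⌋ < s ≤ d. -/
/- # Preliminary definitions

We work in the polynomial ring `S = k[x_1,…,x_n]`, realized as `MvPolynomial (Fin n) kk`.

* Graded pieces of `Tor_i^S(M, k)` are realized via the (graded) Koszul complex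
  `M ⊗ Λ•(S^n)`: the degree-`j` strand in homological degree `i` is the complex
  whose `i`-th term is the direct sum over `i`-subsets `T` of the variables of the
  degree `j - i` graded piece of `M`.  `TorNonzero` expresses nonvanishing of the
  homology of this strand, i.e. `Tor_i^S(M, k)_j ≠ 0`.
* `reg` is the Castelnuovo–Mumford regularity `max { j - i | Tor_i(M,k)_j ≠ 0 }`.
* `SatisfiesN I d p` says the minimal free resolution of `I` is linear for the first
  `p - 1` steps (with generators in degree `d`), i.e. `Tor_i(I,k)_j = 0` unless
  `j = d + i`, for all `i < p`.  `SatisfiesN I d 2` is "linearly presented". -/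

open MvPolynomial

/-! Write `n = (d+1)q + r` with `0 ≤ r ≤ d` and `q ≥ 1`. Then
`g(n,d) = (d-1)q + r + [r = 0]` and `f(n,d) = (d-1)q + ⌊(d-1)r/(d+1)⌋ + 1`, and since
`(d-1)r = (d+1)r - 2r` the floor is `r - 1` when `1 ≤ r ≤ (d+1)/2` and `r - 2` when
`2r > d+1`. So `g - f` is `1` exactly when `r > ⌊(d+1)/2⌋`, and `0` otherwise. -/

section FvalGval

variable {n d q r : ℕ}

theorem sub_one_mul_div_succ_of_two_mul_le (hr : 0 < r) (h : 2 * r ≤ d + 1) :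
    (d - 1) * r / (d + 1) = r - 1 := by
  obtain ⟨t, rfl⟩ : ∃ t, r = t + 1 := ⟨r - 1, by omega⟩
  obtain ⟨e, rfl⟩ : ∃ e, d = e + 1 := ⟨d - 1, by omega⟩
  refine Nat.div_eq_of_lt_le ?_ ?_ <;> simp only [Nat.add_sub_cancel] <;> nlinarith

theorem sub_one_mul_div_succ_of_lt_two_mul (h : d + 1 < 2 * r) (hr : r ≤ d + 1) :
    (d - 1) * r / (d + 1) = r - 2 := by
  rcases d with _ | e
  · simp only [zero_tsub, zero_mul, Nat.zero_div]
    omega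
  obtain ⟨t, rfl⟩ : ∃ t, r = t + 2 := ⟨r - 2, by omega⟩
  simp only [Nat.add_sub_cancel]
  refine Nat.div_eq_of_lt_le ?_ ?_ <;> nlinarith

theorem fval_mul_add (hq : 1 ≤ q) :
    fval ((d + 1) * q + r) d = (d - 1) * q + (d - 1) * r / (d + 1) + 1 := by
  have hlt : d < (d + 1) * q + r := by nlinarith
  have hsplit : (d - 1) * ((d + 1) * q + r) = (d + 1) * ((d - 1) * q) + (d - 1) * r := by ring
  rw [fval, if_neg hlt.not_gt, if_neg hlt.ne', hsplit, Nat.mul_add_div (by omega)]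

theorem gval_mul_add (hd : 1 ≤ d) (hq : 1 ≤ q) (hr : r < d + 1) :
    gval ((d + 1) * q + r) d = (d - 1) * q + r + if r = 0 then 1 else 0 := by
  have hdiv : ((d + 1) * q + r) / (d + 1) = q := by
    rw [Nat.mul_add_div (by omega), Nat.div_eq_of_lt hr, add_zero]
  have hpred : ((d + 1) * q + r - 1) / (d + 1) = if r = 0 then q - 1 else q := by
    split_ifs with h0
    · obtain ⟨p, rfl⟩ : ∃ p, q = p + 1 := ⟨q - 1, by omega⟩
      rw [show (d + 1) * (p + 1) + r - 1 = (d + 1) * p + d by rw [h0]; ring_nf; omega,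
        Nat.mul_add_div (by omega), Nat.div_eq_of_lt (by omega)]
      rfl
    · rw [show (d + 1) * q + r - 1 = (d + 1) * q + (r - 1) by omega,
        Nat.mul_add_div (by omega), Nat.div_eq_of_lt (by omega), add_zero]
  have hexpand : (d + 1) * q = (d - 1) * q + 2 * q := by
    obtain ⟨e, rfl⟩ : ∃ e, d = e + 1 := ⟨d - 1, by omega⟩
    simp only [Nat.add_sub_cancel]; ring
  rw [gval, hdiv, hpred]
  split_ifs <;> omega

theorem gval_eq_fval_add (hd : 1 ≤ d) (hn : d < n) :
    gval n d = fval n d + if (d + 1) / 2 < n % (d + 1) then 1 else 0 := by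
  have hq : 1 ≤ n / (d + 1) := (Nat.one_le_div_iff (by omega)).2 hn
  have hr : n % (d + 1) < d + 1 := Nat.mod_lt _ (by omega)
  have hg := gval_mul_add hd hq hr
  have hf := fval_mul_add (d := d) (r := n % (d + 1)) hq
  rw [Nat.div_add_mod] at hg hf
  rw [hg, hf]
  rcases Nat.eq_zero_or_pos (n % (d + 1)) with h0 | hpos
  · simp [h0]
  rcases le_or_gt (2 * (n % (d + 1))) (d + 1) with hsmall | hlarge
  · rw [sub_one_mul_div_succ_of_two_mul_le hpos hsmall]
    split_ifs <;> omega
  · rw [sub_one_mul_div_succ_of_lt_two_mul hlarge hr.le]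
    split_ifs <;> omega

theorem exists_mul_add_iff :
    (∃ k s : ℕ, 1 ≤ k ∧ (d + 1) / 2 < s ∧ s ≤ d ∧ n = (d + 1) * k + s) ↔
      d < n ∧ (d + 1) / 2 < n % (d + 1) := by
  constructor
  · rintro ⟨k, s, hk, hs, hsd, rfl⟩
    rw [Nat.mul_add_mod, Nat.mod_eq_of_lt (by omega)]
    exact ⟨by nlinarith, hs⟩
  · rintro ⟨hn, hs⟩
    exact ⟨n / (d + 1), n % (d + 1), (Nat.one_le_div_iff (by omega)).2 hn, hs,
      Nat.lt_succ_iff.1 (Nat.mod_lt _ (by omega)), (Nat.div_add_mod n (d + 1)).symm⟩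

theorem one_le_fval_of_lt (hn : d < n) : 1 ≤ fval n d := by
  rw [fval, if_neg hn.not_gt, if_neg hn.ne']
  exact Nat.le_add_left 1 _

end FvalGval

/-- **Lemma 2.10.** For `d ≥ 2` and `n ≥ d`: `g(n,d) - 1 ≤ f(n,d) ≤ g(n,d)`, and
`f(n,d) = g(n,d) - 1` iff `n = (d+1)k + s` for some `k ≥ 1` and `⌊(d+1)/2⌋ < s ≤ d`. -/
theorem fval_gval_compare (n d : ℕ) (hd : 2 ≤ d) (hn : d ≤ n) :
    (gval n d - 1 ≤ fval n d ∧ fval n d ≤ gval n d) ∧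
    (fval n d = gval n d - 1 ↔
      ∃ k s : ℕ, 1 ≤ k ∧ (d + 1) / 2 < s ∧ s ≤ d ∧ n = (d + 1) * k + s) := by
  rw [exists_mul_add_iff]
  rcases hn.eq_or_lt with rfl | hlt
  · have hf : fval d d = d := by simp [fval]
    have hg : gval d d = d := by
      rw [gval, Nat.div_eq_of_lt (by omega), Nat.div_eq_of_lt (by omega : d - 1 < d + 1)]; rfl
    rw [hf, hg]
    omega
  · have key := gval_eq_fval_add (by omega) hlt
    have hf := one_le_fval_of_lt hlt
    split_ifs at key <;> omega
end

section
/- Let I be a squarefree monomial ideal generated in degree d in the polynomial ring S = k[x_1,...,x_{d+1}] in d+1 variables over a field k, and let f be a non-zero squarefree monomial with 1 ≤ deg(f) ≤ d. Then reg(I + (f)) ≤ d. -/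
/- # Preliminary definitions

We work in the polynomial ring `S = k[x_1,…,x_n]`, realized as `MvPolynomial (Fin n) kk`.

* Graded pieces of `Tor_i^S(M, k)` are realized via the (graded) Koszul complex
  `M ⊗ Λ•(S^n)`: the degree-`j` strand in homological degree `i` is the complex
  whose `i`-th term is the direct sum over `i`-subsets `T` of the variables of the
  degree `j - i` graded piece of `M`.  `TorNonzero` expresses nonvanishing of the
  homology of this strand, i.e. `Tor_i^S(M, k)_j ≠ 0`.
* `reg` is the Castelnuovo–Mumford regularity `max { j - i | Tor_i(M,k)_j ≠ 0 }`.
* `SatisfiesN I d p` says the minimal free resolution of `I` is linear for the first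
  `p - 1` steps (with generators in degree `d`), i.e. `Tor_i(I,k)_j = 0` unless
  `j = d + i`, for all `i < p`.  `SatisfiesN I d 2` is "linearly presented". -/

open MvPolynomial

/-! The Koszul complex of `J = (x_T : T ∈ G)` is multigraded by exponent vectors `b`, and its
part of multidegree `b` is a complex of coefficient functions on finite sets `V` (with
differential `coeffD`) supported where `x ^ (b - sqExp V) ∈ J`. If adding some `s` to such a `V`
keeps that property, `coeffH s` is a contracting homotopy and the part is exact. For `|b| > d + i`
such an `s` exists: if `b_s ≥ 2`, squarefree generators survive division by `x_s`; otherwise `b`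
is squarefree, which in `n ≤ d + 1` variables forces `i = 0` and `b = x_1 ⋯ x_{d+1}`, and a
generator of degree `≤ d` dividing `x ^ b` misses some `x_s`. Hence `Tor_i(J)_j = 0` for
`j > d + i`. -/

namespace Koszul

open Finsupp

variable {kk : Type} [Field kk] {n : ℕ}

noncomputable def sqExp (T : Finset (Fin n)) : Fin n →₀ ℕ := ∑ s ∈ T, single s 1

lemma sqExp_apply (T : Finset (Fin n)) (r : Fin n) : sqExp T r = if r ∈ T then 1 else 0 := by
  classical
  simp [sqExp, Finset.sum_apply', single_apply]

lemma sqExp_insert {T : Finset (Fin n)} {t : Fin n} (ht : t ∉ T) :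
    sqExp (insert t T) = sqExp T + single t 1 := by
  rw [sqExp, sqExp, Finset.sum_insert ht, add_comm]

lemma sqExp_mono {T U : Finset (Fin n)} (h : T ⊆ U) : sqExp T ≤ sqExp U := fun r => by
  simp only [sqExp_apply]
  split_ifs <;> simp_all [Finset.subset_iff]

lemma degree_sqExp (T : Finset (Fin n)) : (sqExp T).degree = T.card := by
  simp [sqExp, degree_single]

lemma degree_tsub_sqExp {T : Finset (Fin n)} {b : Fin n →₀ ℕ} (h : sqExp T ≤ b) :
    (b - sqExp T).degree + T.card = b.degree := by
  rw [← degree_sqExp, ← map_add, tsub_add_cancel_of_le h]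

lemma tsub_sqExp_insert {T : Finset (Fin n)} {t : Fin n} (ht : t ∉ T) (b : Fin n →₀ ℕ) :
    b - sqExp (insert t T) = b - sqExp T - single t 1 := by
  rw [sqExp_insert ht, tsub_add_eq_tsub_tsub]

lemma sqExp_insert_le_iff {T : Finset (Fin n)} {t : Fin n} (ht : t ∉ T) {b : Fin n →₀ ℕ} :
    sqExp (insert t T) ≤ b ↔ sqExp T ≤ b ∧ b t ≠ 0 := by
  simp only [Finsupp.le_def, sqExp_apply, Finset.mem_insert]
  refine ⟨fun h => ⟨fun r => le_trans (by split_ifs <;> simp_all) (h r), ?_⟩,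
    fun ⟨h, hbt⟩ r => ?_⟩
  · have := h t
    simp at this
    omega
  · by_cases hr : r = t
    · subst hr
      simp [ht]
      omega
    · simpa [hr] using h r

lemma sqMonomial_eq_monomial (T : Finset (Fin n)) :
    sqMonomial kk T = monomial (sqExp T) (1 : kk) := by
  rw [sqExp, monomial_sum_one]
  rfl

lemma sqMonomial_image (G : Set (Finset (Fin n))) :
    sqMonomial kk '' G = (fun a => monomial a (1 : kk)) '' (sqExp '' G) := by
  rw [Set.image_image]
  simp_rw [sqMonomial_eq_monomial]

lemma mem_span_sqMonomial_iff {G : Set (Finset (Fin n))} {p : MvPolynomial (Fin n) kk} :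
    p ∈ Ideal.span (sqMonomial kk '' G) ↔ ∀ c ∈ p.support, ∃ T ∈ G, sqExp T ≤ c := by
  simp [sqMonomial_image, mem_ideal_span_monomial_image]

lemma monomial_mem_span_sqMonomial_iff {G : Set (Finset (Fin n))} {c : Fin n →₀ ℕ} :
    monomial c (1 : kk) ∈ Ideal.span (sqMonomial kk '' G) ↔ ∃ T ∈ G, sqExp T ≤ c := by
  simp [mem_span_sqMonomial_iff]

lemma monomial_mem_span_sqMonomial_of_mem_support {G : Set (Finset (Fin n))}
    {p : MvPolynomial (Fin n) kk} (hp : p ∈ Ideal.span (sqMonomial kk '' G))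
    {c : Fin n →₀ ℕ} (hc : c ∈ p.support) :
    monomial c (1 : kk) ∈ Ideal.span (sqMonomial kk '' G) :=
  monomial_mem_span_sqMonomial_iff.mpr (mem_span_sqMonomial_iff.mp hp c hc)

noncomputable def sgn (kk : Type) [Field kk] (U : Finset (Fin n)) (t : Fin n) : kk :=
  (-1) ^ (U.filter (· < t)).card

lemma sgn_mul_self (U : Finset (Fin n)) (t : Fin n) : sgn kk U t * sgn kk U t = 1 := by
  rw [sgn, ← mul_pow]
  norm_num

lemma sgn_insert (U : Finset (Fin n)) {r : Fin n} (t : Fin n) (hr : r ∉ U) :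
    sgn kk (insert r U) t = (if r < t then -1 else 1) * sgn kk U t := by
  rw [sgn, sgn, Finset.filter_insert]
  split_ifs with hrt
  · rw [Finset.card_insert_of_notMem (fun h => hr (Finset.mem_of_mem_filter _ h)), pow_succ]
    ring
  · rw [one_mul]

lemma sgn_swap {U : Finset (Fin n)} {s t : Fin n} (hst : s ≠ t) (hs : s ∉ U) (ht : t ∉ U) :
    sgn kk (insert s U) t * sgn kk (insert t U) s = -(sgn kk U t * sgn kk U s) := by
  rw [sgn_insert U t hs, sgn_insert U s ht]
  rcases hst.lt_or_gt with h | h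
  · rw [if_pos h, if_neg h.asymm]
    ring
  · rw [if_neg h.asymm, if_pos h]
    ring

/-- `Dmap` on elements of a fixed multidegree, read on coefficients (see `Dmap_ofCoeff`);
it does not depend on the multidegree, and all homological degrees are treated at once. -/
noncomputable def coeffD (lam : Finset (Fin n) → kk) (U : Finset (Fin n)) : kk :=
  ∑ t ∈ Uᶜ, sgn kk U t * lam (insert t U)

noncomputable def coeffH (s : Fin n) (lam : Finset (Fin n) → kk) (T : Finset (Fin n)) : kk :=
  if s ∈ T then sgn kk (T.erase s) s * lam (T.erase s) else 0

theorem coeffD_coeffH_add_coeffH_coeffD (s : Fin n) (lam : Finset (Fin n) → kk) :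
    coeffD (coeffH s lam) + coeffH s (coeffD lam) = lam := by
  funext T
  simp only [Pi.add_apply, coeffD, coeffH]
  by_cases hsT : s ∈ T
  · set U := T.erase s
    have hsU : s ∉ U := Finset.notMem_erase s T
    have hTU : insert s U = T := Finset.insert_erase hsT
    have hUc : Uᶜ = insert s Tᶜ := by
      ext r
      by_cases hr : r = s <;> simp [U, hr, hsT]
    have hterm : ∀ t ∈ Tᶜ, sgn kk T t * (if s ∈ insert t T then
        sgn kk ((insert t T).erase s) s * lam ((insert t T).erase s) else 0) =
        -(sgn kk U s * (sgn kk U t * lam (insert t U))) := by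
      intro t ht
      have htT : t ∉ T := Finset.mem_compl.mp ht
      have hst : s ≠ t := fun h => htT (h ▸ hsT)
      rw [if_pos (Finset.mem_insert_of_mem hsT), Finset.erase_insert_of_ne hst.symm,
        show sgn kk T t = sgn kk (insert s U) t by rw [hTU], ← mul_assoc,
        sgn_swap hst hsU fun h => htT (Finset.mem_of_mem_erase h)]
      ring
    rw [Finset.sum_congr rfl hterm, if_pos hsT, hUc,
      Finset.sum_insert (Finset.notMem_compl.mpr hsT), hTU, Finset.sum_neg_distrib,
      mul_add, Finset.mul_sum, ← mul_assoc, sgn_mul_self, one_mul]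
    ring
  · rw [if_neg hsT, add_zero, Finset.sum_eq_single_of_mem s (Finset.mem_compl.mpr hsT)]
    · rw [if_pos (Finset.mem_insert_self s T), Finset.erase_insert hsT, ← mul_assoc,
        sgn_mul_self, one_mul]
    · intro t _ hts
      rw [if_neg (by simp [hts.symm, hsT]), mul_zero]

lemma Dmap_apply (m : ℕ) (f : KModule kk n (m + 1)) (T : {T : Finset (Fin n) // T.card = m}) :
    Dmap kk n m f T = ∑ t ∈ (T.1ᶜ).attach,
      sgn kk T.1 t.1 • (X t.1 * f ⟨insert t.1 T.1, by
        rw [Finset.card_insert_of_notMem (Finset.mem_compl.mp t.2), T.2]⟩) := rfl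

lemma X_mul_monomial_tsub_sqExp_insert {T : Finset (Fin n)} {t : Fin n} (ht : t ∉ T)
    {b : Fin n →₀ ℕ} (hb : sqExp (insert t T) ≤ b) (c : kk) :
    X t * monomial (b - sqExp (insert t T)) c = monomial (b - sqExp T) c := by
  have hbt : single t 1 ≤ b - sqExp T := le_tsub_of_add_le_left (sqExp_insert ht ▸ hb)
  rw [X, monomial_mul, one_mul, tsub_sqExp_insert ht, add_tsub_cancel_of_le hbt]

lemma coeff_tsub_sqExp_X_mul {T : Finset (Fin n)} {t : Fin n} (ht : t ∉ T)
    {b : Fin n →₀ ℕ} (hb : sqExp T ≤ b) (p : MvPolynomial (Fin n) kk) :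
    coeff (b - sqExp T) (X t * p) =
      if sqExp (insert t T) ≤ b then coeff (b - sqExp (insert t T)) p else 0 := by
  classical
  have hbt : (b - sqExp T) t = b t := by simp [sqExp_apply, ht]
  rw [coeff_X_mul', tsub_sqExp_insert ht]
  simp [Finsupp.mem_support_iff, hbt, sqExp_insert_le_iff ht, hb]

noncomputable def ofCoeff {i : ℕ} (b : Fin n →₀ ℕ) (lam : Finset (Fin n) → kk) :
    KModule kk n i :=
  fun T => if sqExp T.1 ≤ b then monomial (b - sqExp T.1) (lam T.1) else 0

/-- `ofCoeff b (coeffOf b z)` is the multidegree-`b` component of `z`. -/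
noncomputable def coeffOf {i : ℕ} (b : Fin n →₀ ℕ) (z : KModule kk n i)
    (V : Finset (Fin n)) : kk :=
  if h : V.card = i ∧ sqExp V ≤ b then coeff (b - sqExp V) (z ⟨V, h.1⟩) else 0

lemma ofCoeff_congr {i : ℕ} {b : Fin n →₀ ℕ} {lam mu : Finset (Fin n) → kk}
    (h : ∀ T : Finset (Fin n), T.card = i → sqExp T ≤ b → lam T = mu T) :
    (ofCoeff b lam : KModule kk n i) = ofCoeff b mu := by
  funext T
  unfold ofCoeff
  split_ifs with hT
  · rw [h T.1 T.2 hT]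
  · rfl

lemma Dmap_ofCoeff (m : ℕ) {b : Fin n →₀ ℕ} {lam : Finset (Fin n) → kk}
    (hlam : ∀ V, lam V ≠ 0 → sqExp V ≤ b) :
    Dmap kk n m (ofCoeff b lam) = ofCoeff b (coeffD lam) := by
  funext T
  rw [Dmap_apply]
  simp only [ofCoeff]
  split_ifs with hTb
  · rw [coeffD, map_sum, ← Finset.sum_attach T.1ᶜ]
    refine Finset.sum_congr rfl fun t _ => ?_
    have ht : t.1 ∉ T.1 := Finset.mem_compl.mp t.2
    split_ifs with htb
    · rw [X_mul_monomial_tsub_sqExp_insert ht htb, smul_monomial, smul_eq_mul]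
    · rw [not_imp_comm.mp (hlam _) htb, mul_zero, smul_zero, mul_zero, monomial_zero]
  · refine Finset.sum_eq_zero fun t _ => ?_
    rw [if_neg fun h => hTb (le_trans (sqExp_mono (Finset.subset_insert _ _)) h), mul_zero,
      smul_zero]

lemma coeffOf_eq_zero_of_card_ne {i : ℕ} {b : Fin n →₀ ℕ} (z : KModule kk n i)
    {V : Finset (Fin n)} (hV : V.card ≠ i) : coeffOf b z V = 0 :=
  dif_neg fun h => hV h.1

lemma coeff_Dmap_apply (m : ℕ) (b : Fin n →₀ ℕ) (z : KModule kk n (m + 1))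
    (U : {T : Finset (Fin n) // T.card = m}) (hU : sqExp U.1 ≤ b) :
    coeff (b - sqExp U.1) (Dmap kk n m z U) = coeffD (coeffOf b z) U.1 := by
  rw [Dmap_apply, coeff_sum, coeffD, ← Finset.sum_attach U.1ᶜ]
  refine Finset.sum_congr rfl fun t _ => ?_
  have ht : t.1 ∉ U.1 := Finset.mem_compl.mp t.2
  rw [coeff_smul, smul_eq_mul, coeff_tsub_sqExp_X_mul ht hU, coeffOf]
  have hcard : (insert t.1 U.1).card = m + 1 := by
    rw [Finset.card_insert_of_notMem ht, U.2]
  by_cases htb : sqExp (insert t.1 U.1) ≤ b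
  · rw [if_pos htb, dif_pos ⟨hcard, htb⟩]
  · rw [if_neg htb, dif_neg fun h => htb h.2]

lemma coeffD_coeffOf_eq_zero {i : ℕ} {b : Fin n →₀ ℕ} {z : KModule kk n i}
    (hz : z ∈ LinearMap.ker (Dout kk n i)) {U : Finset (Fin n)} (hU : sqExp U ≤ b) :
    coeffD (coeffOf b z) U = 0 := by
  by_cases hi : U.card + 1 = i
  · subst hi
    rw [← coeff_Dmap_apply U.card b z ⟨U, rfl⟩ hU,
      show Dmap kk n U.card z = 0 from LinearMap.mem_ker.mp hz]
    rfl
  · refine Finset.sum_eq_zero fun t ht => ?_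
    rw [coeffOf_eq_zero_of_card_ne z, mul_zero]
    rwa [Finset.card_insert_of_notMem (Finset.mem_compl.mp ht)]

lemma ofCoeff_coeffOf_apply {i : ℕ} (b : Fin n →₀ ℕ) (z : KModule kk n i)
    (T : {T : Finset (Fin n) // T.card = i}) :
    ofCoeff b (coeffOf b z) T =
      if sqExp T.1 ≤ b then monomial (b - sqExp T.1) (coeff (b - sqExp T.1) (z T)) else 0 := by
  unfold ofCoeff coeffOf
  split_ifs with h h'
  · rfl
  · exact absurd ⟨T.2, h⟩ h'
  · rfl

theorem exists_sum_ofCoeff_coeffOf {i : ℕ} (z : KModule kk n i) :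
    ∃ B : Finset (Fin n →₀ ℕ), ∑ b ∈ B, ofCoeff b (coeffOf b z) = z := by
  classical
  refine ⟨Finset.univ.biUnion fun T => (z T).support.image (· + sqExp T.1), ?_⟩
  funext T
  have hsub : (z T).support.image (· + sqExp T.1) ⊆
      Finset.univ.biUnion fun T => (z T).support.image (· + sqExp T.1) :=
    Finset.subset_biUnion_of_mem (fun T => (z T).support.image (· + sqExp T.1))
      (Finset.mem_univ T)
  rw [Finset.sum_apply, ← Finset.sum_subset hsub,
    Finset.sum_image fun _ _ _ _ => add_right_cancel]
  · conv_rhs => rw [← support_sum_monomial_coeff (z T)]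
    refine Finset.sum_congr rfl fun c _ => ?_
    rw [ofCoeff_coeffOf_apply, if_pos le_add_self, add_tsub_cancel_right]
  · intro b _ hb
    rw [ofCoeff_coeffOf_apply]
    split_ifs with hTb
    · rw [MvPolynomial.notMem_support_iff.mp fun hc => hb (Finset.mem_image.mpr
        ⟨_, hc, tsub_add_cancel_of_le hTb⟩), monomial_zero]
    · rfl

/-- The support condition under which `ofCoeff b lam` lies in `koszulStrand J i j`. -/
def StrandCoeffs (J : Ideal (MvPolynomial (Fin n) kk)) (i : ℕ) (j : ℤ) (b : Fin n →₀ ℕ)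
    (lam : Finset (Fin n) → kk) : Prop :=
  ∀ V, lam V ≠ 0 →
    V.card = i ∧ sqExp V ≤ b ∧ monomial (b - sqExp V) (1 : kk) ∈ J ∧ (b.degree : ℤ) = j

/-- Adding `s` to `V` divides `x ^ (b - sqExp V)` by `x_s`; this is what makes `coeffH s`
preserve `StrandCoeffs J i j b`. -/
def IsContractingVar (J : Ideal (MvPolynomial (Fin n) kk)) (i : ℕ) (b : Fin n →₀ ℕ)
    (s : Fin n) : Prop :=
  ∀ V : Finset (Fin n), V.card = i → s ∉ V → sqExp V ≤ b →
    monomial (b - sqExp V) (1 : kk) ∈ J →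
    sqExp (insert s V) ≤ b ∧ monomial (b - sqExp (insert s V)) (1 : kk) ∈ J

section Strand

variable {J : Ideal (MvPolynomial (Fin n) kk)} {i : ℕ} {j : ℤ} {b : Fin n →₀ ℕ}
  {lam : Finset (Fin n) → kk}

lemma ofCoeff_mem_koszulStrand (h : StrandCoeffs J i j b lam) :
    (ofCoeff b lam : KModule kk n i) ∈ koszulStrand J i j := by
  refine Submodule.mem_pi.mpr fun T _ => ?_
  by_cases hT : sqExp T.1 ≤ b ∧ lam T.1 ≠ 0
  · obtain ⟨-, -, hJ, hj⟩ := h T.1 hT.2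
    have hdeg := degree_tsub_sqExp hT.1
    rw [T.2] at hdeg
    rw [gradedPiece, if_neg (by omega), Submodule.mem_inf, Submodule.restrictScalars_mem,
      mem_homogeneousSubmodule, ofCoeff, if_pos hT.1]
    refine ⟨?_, isHomogeneous_monomial _ (by omega)⟩
    simpa [smul_monomial] using Submodule.smul_of_tower_mem J (lam T.1) hJ
  · rw [ofCoeff]
    split_ifs with hb
    · rw [not_and_not_right.mp hT hb, monomial_zero]
      exact Submodule.zero_mem _
    · exact Submodule.zero_mem _

lemma strandCoeffs_coeffOf {G : Set (Finset (Fin n))} {z : KModule kk n i}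
    (hz : z ∈ koszulStrand (Ideal.span (sqMonomial kk '' G)) i j) :
    StrandCoeffs (Ideal.span (sqMonomial kk '' G)) i j b (coeffOf b z) := by
  intro V hV
  obtain ⟨hVi, hVb⟩ : V.card = i ∧ sqExp V ≤ b := by
    by_contra h
    exact hV (dif_neg h)
  have hc : b - sqExp V ∈ (z ⟨V, hVi⟩).support := by
    rw [MvPolynomial.mem_support_iff]
    rwa [coeffOf, dif_pos ⟨hVi, hVb⟩] at hV
  have hzV := Submodule.mem_pi.mp hz ⟨V, hVi⟩ (Set.mem_univ _)
  unfold gradedPiece at hzV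
  split_ifs at hzV with hneg
  · rw [(Submodule.mem_bot kk).mp hzV] at hc
    simp at hc
  · rw [Submodule.mem_inf, Submodule.restrictScalars_mem, mem_homogeneousSubmodule] at hzV
    have hdeg : (b - sqExp V).degree = (j - i).toNat := by
      rw [degree_eq_weight_one]
      exact hzV.2 (MvPolynomial.mem_support_iff.mp hc)
    have hbV := degree_tsub_sqExp hVb
    refine ⟨hVi, hVb, monomial_mem_span_sqMonomial_of_mem_support hzV.1 hc, ?_⟩
    omega

lemma StrandCoeffs.coeffH {s : Fin n} (h : StrandCoeffs J i j b lam)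
    (hs : IsContractingVar J i b s) : StrandCoeffs J (i + 1) j b (coeffH s lam) := by
  intro V hV
  have hsV : s ∈ V := by
    by_contra hsV
    exact hV (if_neg hsV)
  have hlam : lam (V.erase s) ≠ 0 := by
    intro h0
    exact hV (by rw [Koszul.coeffH, if_pos hsV, h0, mul_zero])
  obtain ⟨hcard, hb, hJ, hj⟩ := h _ hlam
  obtain ⟨hVb, hVJ⟩ := hs _ hcard (Finset.notMem_erase s V) hb hJ
  rw [Finset.insert_erase hsV] at hVb hVJ
  refine ⟨?_, hVb, hVJ, hj⟩
  rw [← hcard, Finset.card_erase_of_mem hsV,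
    Nat.sub_add_cancel (Finset.card_pos.mpr ⟨s, hsV⟩)]

theorem Dmap_ofCoeff_coeffH {s : Fin n} (h : StrandCoeffs J i j b lam)
    (hs : IsContractingVar J i b s) (hcyc : ∀ U, sqExp U ≤ b → coeffD lam U = 0) :
    Dmap kk n i (ofCoeff b (coeffH s lam)) = ofCoeff b lam := by
  rw [Dmap_ofCoeff i fun V hV => ((h.coeffH hs) V hV).2.1]
  refine ofCoeff_congr fun T _ hTb => ?_
  have hH : coeffH s (coeffD lam) T = 0 := by
    unfold Koszul.coeffH
    split_ifs
    · rw [hcyc _ (le_trans (sqExp_mono (Finset.erase_subset s T)) hTb), mul_zero]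
    · rfl
  simpa [hH] using congrFun (coeffD_coeffH_add_coeffH_coeffD s lam) T

end Strand

section SquarefreeGenerators

variable {G : Set (Finset (Fin n))}

lemma monomial_tsub_single_mem_span_sqMonomial {c : Fin n →₀ ℕ} {s : Fin n}
    (hc : monomial c (1 : kk) ∈ Ideal.span (sqMonomial kk '' G)) (hs : 2 ≤ c s) :
    monomial (c - single s 1) (1 : kk) ∈ Ideal.span (sqMonomial kk '' G) := by
  obtain ⟨T, hT, hTc⟩ := monomial_mem_span_sqMonomial_iff.mp hc
  refine monomial_mem_span_sqMonomial_iff.mpr ⟨T, hT, fun r => ?_⟩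
  have hTs : sqExp T s ≤ 1 := by
    rw [sqExp_apply]
    split_ifs <;> omega
  by_cases hrs : r = s
  · subst hrs
    simp only [tsub_apply, single_eq_same]
    omega
  · simpa [single_eq_of_ne hrs] using hTc r

lemma exists_monomial_tsub_single_mem_span_sqMonomial {d : ℕ} (hG : ∀ T ∈ G, T.card ≤ d)
    {c : Fin n →₀ ℕ} (hc : monomial c (1 : kk) ∈ Ideal.span (sqMonomial kk '' G))
    (hcd : d < c.degree) :
    ∃ s, c s ≠ 0 ∧
      monomial (c - single s 1) (1 : kk) ∈ Ideal.span (sqMonomial kk '' G) := by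
  obtain ⟨T, hT, hTc⟩ := monomial_mem_span_sqMonomial_iff.mp hc
  obtain ⟨s, hs⟩ : ∃ s, sqExp T s < c s := by
    by_contra! h
    rw [← le_antisymm hTc h, degree_sqExp] at hcd
    linarith [hG T hT]
  refine ⟨s, by omega, monomial_mem_span_sqMonomial_iff.mpr ⟨T, hT, fun r => ?_⟩⟩
  have hr := hTc r
  simp only [tsub_apply, single_apply]
  split_ifs with hsr
  · subst hsr
    omega
  · simpa using hr

lemma isContractingVar_of_two_le {i : ℕ} {b : Fin n →₀ ℕ} {s : Fin n} (hs : 2 ≤ b s) :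
    IsContractingVar (Ideal.span (sqMonomial kk '' G)) i b s := by
  intro V _ hsV hVb hJ
  have hbs : (b - sqExp V) s = b s := by simp [sqExp_apply, hsV]
  refine ⟨(sqExp_insert_le_iff hsV).mpr ⟨hVb, by omega⟩, ?_⟩
  rw [tsub_sqExp_insert hsV]
  exact monomial_tsub_single_mem_span_sqMonomial hJ (hbs ▸ hs)

lemma degree_le_card_of_le_one {b : Fin n →₀ ℕ} (hb : ∀ r, b r ≤ 1) : b.degree ≤ n := by
  rw [degree_eq_sum]
  simpa using Finset.sum_le_sum fun r (_ : r ∈ Finset.univ) => hb r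

theorem exists_isContractingVar {d i : ℕ} (hG : ∀ T ∈ G, T.card ≤ d) (hn : n ≤ d + 1)
    {b : Fin n →₀ ℕ} (hb : d + i < b.degree) {V₀ : Finset (Fin n)} (hV₀ : V₀.card = i)
    (hV₀b : sqExp V₀ ≤ b)
    (hV₀J : monomial (b - sqExp V₀) (1 : kk) ∈ Ideal.span (sqMonomial kk '' G)) :
    ∃ s, IsContractingVar (Ideal.span (sqMonomial kk '' G)) i b s := by
  by_cases h2 : ∃ s, 2 ≤ b s
  · obtain ⟨s, hs⟩ := h2
    exact ⟨s, isContractingVar_of_two_le hs⟩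
  push Not at h2
  have hbn := degree_le_card_of_le_one fun r => Nat.lt_succ_iff.mp (h2 r)
  obtain rfl : i = 0 := by omega
  obtain rfl := Finset.card_eq_zero.mp hV₀
  have hsqExp_empty : sqExp (∅ : Finset (Fin n)) = 0 := by simp [sqExp]
  rw [hsqExp_empty, tsub_zero] at hV₀J
  obtain ⟨s, hbs, hsJ⟩ := exists_monomial_tsub_single_mem_span_sqMonomial hG hV₀J (by omega)
  refine ⟨s, fun V hV _ _ _ => ?_⟩
  obtain rfl := Finset.card_eq_zero.mp hV
  rw [sqExp_insert_le_iff (Finset.notMem_empty s), tsub_sqExp_insert (Finset.notMem_empty s),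
    hsqExp_empty, tsub_zero]
  exact ⟨⟨zero_le, hbs⟩, hsJ⟩

theorem ofCoeff_coeffOf_mem_map_Dmap {d i : ℕ} {j : ℤ} (hG : ∀ T ∈ G, T.card ≤ d)
    (hn : n ≤ d + 1) (hj : d + i < j) {z : KModule kk n i}
    (hz : z ∈ koszulStrand (Ideal.span (sqMonomial kk '' G)) i j ⊓ LinearMap.ker (Dout kk n i))
    (b : Fin n →₀ ℕ) :
    ofCoeff b (coeffOf b z) ∈
      Submodule.map (Dmap kk n i) (koszulStrand (Ideal.span (sqMonomial kk '' G)) (i + 1) j) := by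
  have hlam := strandCoeffs_coeffOf (b := b) hz.1
  by_cases h0 : ∃ V, coeffOf b z V ≠ 0
  · obtain ⟨V₀, hV₀⟩ := h0
    obtain ⟨hV₀i, hV₀b, hV₀J, hbj⟩ := hlam V₀ hV₀
    obtain ⟨s, hs⟩ := exists_isContractingVar hG hn (by omega) hV₀i hV₀b hV₀J
    exact ⟨_, ofCoeff_mem_koszulStrand (hlam.coeffH hs),
      Dmap_ofCoeff_coeffH hlam hs fun U hU => coeffD_coeffOf_eq_zero hz.2 hU⟩
  · push Not at h0
    have : (ofCoeff b (coeffOf b z) : KModule kk n i) = 0 := by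
      funext T
      simp [ofCoeff, h0]
    rw [this]
    exact Submodule.zero_mem _

theorem not_torNonzero_span_sqMonomial {d i : ℕ} {j : ℤ} (hG : ∀ T ∈ G, T.card ≤ d)
    (hn : n ≤ d + 1) (hj : d + i < j) :
    ¬ TorNonzero (Ideal.span (sqMonomial kk '' G)) i j := by
  rw [TorNonzero, not_not]
  intro z hz
  obtain ⟨B, hB⟩ := exists_sum_ofCoeff_coeffOf z
  rw [← hB]
  exact Submodule.sum_mem _ fun b _ => ofCoeff_coeffOf_mem_map_Dmap hG hn hj hz b

end SquarefreeGenerators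

end Koszul

lemma reg_le_of_forall_torNonzero {kk : Type} [Field kk] {n : ℕ}
    {I : Ideal (MvPolynomial (Fin n) kk)} {r : ℤ} (hr : 0 ≤ r)
    (h : ∀ i j, TorNonzero I i j → j - i ≤ r) : reg I ≤ r := by
  rcases Set.eq_empty_or_nonempty
    {r : ℤ | ∃ (i : ℕ) (j : ℤ), TorNonzero I i j ∧ r = j - i} with he | hne
  · rw [reg, he, Int.csSup_empty]
    exact hr
  · refine csSup_le hne ?_
    rintro _ ⟨i, j, hij, rfl⟩
    exact h i j hij

theorem reg_span_sqMonomial_le {kk : Type} [Field kk] {n d : ℕ} {G : Set (Finset (Fin n))}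
    (hG : ∀ T ∈ G, T.card ≤ d) (hn : n ≤ d + 1) :
    reg (Ideal.span (sqMonomial kk '' G)) ≤ d :=
  reg_le_of_forall_torNonzero (Int.natCast_nonneg d) fun i j hij => by
    by_contra h
    exact Koszul.not_torNonzero_span_sqMonomial hG hn (by omega) hij

theorem reg_le_in_dplus1_vars_general (kk : Type) [Field kk] (d : ℕ)
    (I : Ideal (MvPolynomial (Fin (d + 1)) kk))
    (hgen : IsSqfreeMonomialIdealGenInDeg I d)
    (f : Finset (Fin (d + 1))) (hfd : f.card ≤ d) :
    reg (I + Ideal.span {sqMonomial kk f}) ≤ (d : ℤ) := by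
  obtain ⟨G, hG, rfl⟩ := hgen
  have hspan : Ideal.span (sqMonomial kk '' G) + Ideal.span {sqMonomial kk f} =
      Ideal.span (sqMonomial kk '' insert f G) := by
    rw [Set.image_insert_eq, Ideal.span_insert, Submodule.add_eq_sup, sup_comm]
  rw [hspan]
  refine reg_span_sqMonomial_le ?_ le_rfl
  rintro T (rfl | hT)
  exacts [hfd, (hG T hT).le]

/-- **Lemma 2.11.** Let `I` be a squarefree monomial ideal generated in degree `d` in
`S = k[x_1,…,x_{d+1}]` and `f` a non-zero squarefree monomial with `1 ≤ deg f ≤ d`.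
Then `reg (I + (f)) ≤ d`. -/
theorem reg_le_in_dplus1_vars (kk : Type) [Field kk] (d : ℕ)
    (I : Ideal (MvPolynomial (Fin (d + 1)) kk))
    (hgen : IsSqfreeMonomialIdealGenInDeg I d)
    (f : Finset (Fin (d + 1))) (hf1 : 1 ≤ f.card) (hfd : f.card ≤ d) :
    reg (I + Ideal.span {sqMonomial kk f}) ≤ (d : ℤ) :=
  reg_le_in_dplus1_vars_general kk d I hgen f hfd
end

section
/- Any non-zero ideal generated by squarefree monomials of degree d in the polynomial ring k[x_1,...,x_{d+1}] in d+1 variables over a field k has a linear free resolution, i.e., its Castelnuovo–Mumford regularity equals d. -/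
/- # Preliminary definitions

We work in the polynomial ring `S = k[x_1,…,x_n]`, realized as `MvPolynomial (Fin n) kk`.

* Graded pieces of `Tor_i^S(M, k)` are realized via the (graded) Koszul complex
  `M ⊗ Λ•(S^n)`: the degree-`j` strand in homological degree `i` is the complex
  whose `i`-th term is the direct sum over `i`-subsets `T` of the variables of the
  degree `j - i` graded piece of `M`.  `TorNonzero` expresses nonvanishing of the
  homology of this strand, i.e. `Tor_i^S(M, k)_j ≠ 0`.
* `reg` is the Castelnuovo–Mumford regularity `max { j - i | Tor_i(M,k)_j ≠ 0 }`.
* `SatisfiesN I d p` says the minimal free resolution of `I` is linear for the first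
  `p - 1` steps (with generators in degree `d`), i.e. `Tor_i(I,k)_j = 0` unless
  `j = d + i`, for all `i < p`.  `SatisfiesN I d 2` is "linearly presented". -/

open MvPolynomial

/-! Tor is computed by the Koszul complex of `I`, which splits by multidegree. Below degree `d`
the strands vanish because `I` does. In internal degree at least `d + 1`, the number of
variables, each multidegree `α` has a cone vertex `v` (an index with `α_v ≥ 2` if there is one,
otherwise a fixed index outside some generator) such that dividing by `x_v` keeps monomials of
`I` in `I`; contracting with `e_v` is then a homotopy `d h + h d = id` on the strand of `I`, so
every cycle there is a boundary. Hence `Tor_i(I, k)_j ≠ 0` forces `j = d + i`, and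
`Tor_0(I, k)_d ≠ 0` since `I ≠ 0`. -/

open Finsupp in
noncomputable def sqExp {n : ℕ} (T : Finset (Fin n)) : Fin n →₀ ℕ := ∑ t ∈ T, single t 1

section ExponentVectors

variable {n : ℕ}

lemma sqExp_apply [DecidableEq (Fin n)] (T : Finset (Fin n)) (s : Fin n) :
    sqExp T s = if s ∈ T then 1 else 0 := by
  simp [sqExp, Finsupp.finsetSum_apply, Finsupp.single_apply]

lemma sqExp_le_one (T : Finset (Fin n)) (s : Fin n) : sqExp T s ≤ 1 := by
  classical
  rw [sqExp_apply]
  split_ifs <;> simp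

lemma sqExp_insert {T : Finset (Fin n)} {t : Fin n} (h : t ∉ T) :
    sqExp (insert t T) = Finsupp.single t 1 + sqExp T := by
  classical
  rw [sqExp, Finset.sum_insert h, ← sqExp]

lemma single_add_sqExp_erase {U : Finset (Fin n)} {v : Fin n} (h : v ∈ U) :
    Finsupp.single v 1 + sqExp (U.erase v) = sqExp U := by
  rw [← sqExp_insert (Finset.notMem_erase v U), Finset.insert_erase h]

lemma degree_sqExp (T : Finset (Fin n)) : (sqExp T).degree = T.card := by
  simp [sqExp, map_sum]

lemma sqMonomial_eq_monomial (kk : Type) [Field kk] (T : Finset (Fin n)) :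
    sqMonomial kk T = monomial (sqExp T) 1 := by
  rw [sqExp, monomial_sum_one, sqMonomial]
  rfl

end ExponentVectors

section MonomialsOfTheIdeal

variable {kk : Type} [Field kk] {n : ℕ} {G : Set (Finset (Fin n))}

def IsGenMultiple (G : Set (Finset (Fin n))) (μ : Fin n →₀ ℕ) : Prop := ∃ T ∈ G, sqExp T ≤ μ

lemma mem_span_sqMonomial_iff {p : MvPolynomial (Fin n) kk} :
    p ∈ Ideal.span (sqMonomial kk '' G) ↔ ∀ μ ∈ p.support, IsGenMultiple G μ := by
  have himage : sqMonomial kk '' G = (fun a => monomial a (1 : kk)) '' (sqExp '' G) := by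
    rw [Set.image_image]
    exact Set.image_congr fun T _ => sqMonomial_eq_monomial kk T
  simp [himage, mem_ideal_span_monomial_image, IsGenMultiple]

lemma mem_gradedPiece_iff_s13 {p : MvPolynomial (Fin n) kk} (m : ℕ) :
    p ∈ gradedPiece (Ideal.span (sqMonomial kk '' G)) m ↔
      ∀ μ ∈ p.support, IsGenMultiple G μ ∧ μ.degree = m := by
  rw [gradedPiece, if_neg (by omega), Submodule.mem_inf, Submodule.restrictScalars_mem,
    mem_span_sqMonomial_iff, homogeneousSubmodule_eq_finsupp_supported,
    AddMonoidAlgebra.mem_supported, Int.toNat_natCast]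
  exact ⟨fun h μ hμ => ⟨h.1 μ hμ, h.2 hμ⟩,
    fun h => ⟨fun μ hμ => (h μ hμ).1, fun μ hμ => (h μ hμ).2⟩⟩

lemma gradedPiece_eq_bot {d : ℕ} (hG : ∀ T ∈ G, T.card = d) {m : ℤ} (hm : m < d) :
    gradedPiece (Ideal.span (sqMonomial kk '' G)) m = ⊥ := by
  rcases lt_or_ge m 0 with hneg | hnonneg
  · rw [gradedPiece, if_pos hneg]
  lift m to ℕ using hnonneg
  refine eq_bot_iff.mpr fun p hp => (Submodule.mem_bot kk).mpr ?_
  by_contra hp0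
  obtain ⟨μ, hμ⟩ := (MvPolynomial.ne_zero_iff).mp hp0
  obtain ⟨⟨T, hT, hle⟩, hdeg⟩ := (mem_gradedPiece_iff_s13 m).mp hp μ (mem_support_iff.mpr hμ)
  have : d ≤ m := by
    rw [← hG T hT, ← degree_sqExp, ← hdeg]
    exact Finsupp.degree_mono hle
  omega

end MonomialsOfTheIdeal

def koszulSign {n : ℕ} (U : Finset (Fin n)) (t : Fin n) : ℕ := (U.filter (· < t)).card

lemma koszulSign_insert {n : ℕ} {U : Finset (Fin n)} {a : Fin n} (t : Fin n) (ha : a ∉ U) :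
    koszulSign (insert a U) t = koszulSign U t + if a < t then 1 else 0 := by
  classical
  rw [koszulSign, Finset.filter_insert]
  split_ifs with h
  · rw [Finset.card_insert_of_notMem (by simp [ha]), koszulSign]
  · rw [add_zero, koszulSign]

lemma neg_one_pow_koszulSign_insert_mul {R : Type*} [CommRing R] {n : ℕ} {W : Finset (Fin n)}
    {t v : Fin n} (htv : t ≠ v) (ht : t ∉ W) (hv : v ∉ W) :
    (-1 : R) ^ koszulSign (insert v W) t * (-1) ^ koszulSign (insert t W) v =
      -((-1) ^ koszulSign W t * (-1) ^ koszulSign W v) := by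
  rw [koszulSign_insert t hv, koszulSign_insert v ht]
  rcases htv.lt_or_gt with h | h
  · simp [h, h.not_gt, pow_succ]
  · simp [h, h.not_gt, pow_succ]

section KoszulHomotopy

open Finsupp (single)

variable {R : Type*} [CommRing R] {n : ℕ}

noncomputable def koszulBd (f : Finset (Fin n) → MvPolynomial (Fin n) R) (U : Finset (Fin n)) :
    MvPolynomial (Fin n) R :=
  ∑ t ∈ Uᶜ, (-1 : R) ^ koszulSign U t • (X t * f (insert t U))

noncomputable def contractionAt (c : (Fin n →₀ ℕ) → Fin n) (W : Finset (Fin n)) (v : Fin n)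
    (p : MvPolynomial (Fin n) R) : MvPolynomial (Fin n) R :=
  ∑ ν ∈ p.support.filter (fun ν => 1 ≤ ν v ∧ c (ν + sqExp W) = v),
    monomial (ν - single v 1) (coeff ν p)

/-- On the basis element `x^μ e_U`, of multidegree `α = μ + sqExp U`, this contracts with
`e_{c α}` and divides by `x_{c α}`. -/
noncomputable def koszulContraction (c : (Fin n →₀ ℕ) → Fin n)
    (f : Finset (Fin n) → MvPolynomial (Fin n) R) (U : Finset (Fin n)) : MvPolynomial (Fin n) R :=
  ∑ v ∈ U, (-1 : R) ^ koszulSign (U.erase v) v • contractionAt c (U.erase v) v (f (U.erase v))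

lemma coeff_koszulBd (f : Finset (Fin n) → MvPolynomial (Fin n) R)
    (U : Finset (Fin n)) (μ : Fin n →₀ ℕ) :
    coeff μ (koszulBd f U) = ∑ t ∈ Uᶜ, (-1 : R) ^ koszulSign U t *
      if t ∈ μ.support then coeff (μ - single t 1) (f (insert t U)) else 0 := by
  classical
  simp only [koszulBd, coeff_sum, coeff_smul, smul_eq_mul, mul_comm (X _), coeff_mul_X']

lemma coeff_contractionAt (c : (Fin n →₀ ℕ) → Fin n) (W : Finset (Fin n)) (v : Fin n)
    (p : MvPolynomial (Fin n) R) (μ : Fin n →₀ ℕ) :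
    coeff μ (contractionAt c W v p) =
      if c (μ + single v 1 + sqExp W) = v then coeff (μ + single v 1) p else 0 := by
  classical
  rw [contractionAt, coeff_sum]
  have hinj : ∀ ν ∈ p.support.filter (fun ν => 1 ≤ ν v ∧ c (ν + sqExp W) = v),
      ν - single v 1 = μ ↔ ν = μ + single v 1 := fun ν hν => by
    have h1 := (Finset.mem_filter.mp hν).2.1
    constructor
    · rintro rfl
      rw [tsub_add_cancel_of_le (Finsupp.single_le_iff.mpr h1)]
    · rintro rfl
      exact add_tsub_cancel_right _ _
  simp_rw [coeff_monomial]
  rw [Finset.sum_congr rfl fun ν hν => if_congr (hinj ν hν) rfl rfl, Finset.sum_ite_eq']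
  simp only [Finset.mem_filter, mem_support_iff, Finsupp.add_apply, Finsupp.single_eq_same]
  by_cases h0 : coeff (μ + single v 1) p = 0 <;> simp [h0]

lemma coeff_koszulContraction (c : (Fin n →₀ ℕ) → Fin n)
    (f : Finset (Fin n) → MvPolynomial (Fin n) R) (U : Finset (Fin n)) (μ : Fin n →₀ ℕ) :
    coeff μ (koszulContraction c f U) =
      if c (μ + sqExp U) ∈ U then
        (-1 : R) ^ koszulSign (U.erase (c (μ + sqExp U))) (c (μ + sqExp U)) *
          coeff (μ + single (c (μ + sqExp U)) 1) (f (U.erase (c (μ + sqExp U))))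
      else 0 := by
  classical
  rw [koszulContraction, coeff_sum]
  have hterm : ∀ v ∈ U, coeff μ ((-1 : R) ^ koszulSign (U.erase v) v •
      contractionAt c (U.erase v) v (f (U.erase v))) =
      if c (μ + sqExp U) = v then
        (-1 : R) ^ koszulSign (U.erase v) v * coeff (μ + single v 1) (f (U.erase v)) else 0 := by
    intro v hv
    rw [coeff_smul, smul_eq_mul, coeff_contractionAt, add_assoc, single_add_sqExp_erase hv]
    split_ifs <;> simp
  rw [Finset.sum_congr rfl hterm, Finset.sum_ite_eq]

lemma koszulContraction_zero (c : (Fin n →₀ ℕ) → Fin n) :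
    koszulContraction c (0 : Finset (Fin n) → MvPolynomial (Fin n) R) = 0 := by
  funext U
  simp [koszulContraction, contractionAt]

variable {c : (Fin n →₀ ℕ) → Fin n} {f : Finset (Fin n) → MvPolynomial (Fin n) R}

lemma coeff_koszulBd_koszulContraction (U : Finset (Fin n)) (μ : Fin n →₀ ℕ) :
    coeff μ (koszulBd (koszulContraction c f) U) = ∑ t ∈ Uᶜ, (-1 : R) ^ koszulSign U t *
      if t ∈ μ.support ∧ c (μ + sqExp U) ∈ insert t U then
        (-1 : R) ^ koszulSign ((insert t U).erase (c (μ + sqExp U))) (c (μ + sqExp U)) *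
          coeff (μ - single t 1 + single (c (μ + sqExp U)) 1)
            (f ((insert t U).erase (c (μ + sqExp U))))
      else 0 := by
  classical
  rw [coeff_koszulBd]
  refine Finset.sum_congr rfl fun t ht => ?_
  by_cases htμ : t ∈ μ.support
  · have hmd : μ - single t 1 + sqExp (insert t U) = μ + sqExp U := by
      rw [sqExp_insert (Finset.mem_compl.mp ht), ← add_assoc, tsub_add_cancel_of_le
        (Finsupp.single_le_iff.mpr (Nat.one_le_iff_ne_zero.mpr (Finsupp.mem_support_iff.mp htμ)))]
    simp only [htμ, true_and, if_true, coeff_koszulContraction, hmd]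
  · simp [htμ]

lemma coeff_koszulBd_koszulContraction_of_notMem {U : Finset (Fin n)} {μ : Fin n →₀ ℕ}
    (hU : c (μ + sqExp U) ∉ U) :
    coeff μ (koszulBd (koszulContraction c f) U) =
      if c (μ + sqExp U) ∈ μ.support then coeff μ (f U) else 0 := by
  classical
  rw [coeff_koszulBd_koszulContraction]
  set v := c (μ + sqExp U)
  rw [Finset.sum_eq_single v]
  · by_cases hvμ : v ∈ μ.support
    · have hμ : μ - single v 1 + single v 1 = μ := tsub_add_cancel_of_le
        (Finsupp.single_le_iff.mpr (Nat.one_le_iff_ne_zero.mpr (Finsupp.mem_support_iff.mp hvμ)))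
      simp only [hvμ, Finset.mem_insert_self, and_self, if_true, Finset.erase_insert hU, hμ,
        ← mul_assoc, ← pow_add, Even.neg_one_pow ⟨_, rfl⟩, one_mul]
    · simp [hvμ]
  · intro t _ htv
    have : v ∉ insert t U := by simp [Ne.symm htv, hU]
    simp only [this, and_false, if_false, mul_zero]
  · intro h
    exact absurd (Finset.mem_compl.mpr hU) h

lemma coeff_koszulBd_koszulContraction_add_of_mem {W : Finset (Fin n)} {v : Fin n}
    {μ : Fin n →₀ ℕ} (hvW : v ∉ W) (hc : c (μ + sqExp (insert v W)) = v) :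
    coeff μ (koszulBd (koszulContraction c f) (insert v W)) +
      coeff μ (koszulContraction c (koszulBd f) (insert v W)) = coeff μ (f (insert v W)) := by
  classical
  have hcompl : Wᶜ = insert v (insert v W)ᶜ := by
    ext s
    by_cases hs : s = v <;> simp [hs, hvW]
  rw [coeff_koszulBd_koszulContraction, coeff_koszulContraction, hc,
    if_pos (Finset.mem_insert_self v W), Finset.erase_insert hvW, coeff_koszulBd, hcompl,
    Finset.sum_insert (by simp), mul_add]
  have hv : v ∈ (μ + single v 1).support := by simp
  have hterm : ∀ t ∈ (insert v W)ᶜ,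
      (-1 : R) ^ koszulSign (insert v W) t *
        (if t ∈ μ.support ∧ v ∈ insert t (insert v W) then
          (-1 : R) ^ koszulSign ((insert t (insert v W)).erase v) v *
            coeff (μ - single t 1 + single v 1) (f ((insert t (insert v W)).erase v))
        else 0) =
      -((-1 : R) ^ koszulSign W v * ((-1 : R) ^ koszulSign W t *
        if t ∈ (μ + single v 1).support then
          coeff (μ + single v 1 - single t 1) (f (insert t W)) else 0)) := by
    intro t ht
    have htvW : t ≠ v ∧ t ∉ W := by simpa using ht
    have hsupp : t ∈ (μ + single v 1).support ↔ t ∈ μ.support := by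
      simp [Ne.symm htvW.1]
    by_cases htμ : t ∈ μ.support
    · have hexp : μ - single t 1 + single v 1 = μ + single v 1 - single t 1 := by
        ext s
        simp only [Finsupp.coe_add, Finsupp.coe_tsub, Pi.add_apply, Pi.sub_apply,
          Finsupp.single_apply]
        have := Finsupp.mem_support_iff.mp htμ
        split_ifs <;> omega
      rw [if_pos ⟨htμ, by simp⟩, if_pos (hsupp.mpr htμ), Finset.erase_insert_of_ne htvW.1,
        Finset.erase_insert hvW, hexp, ← mul_assoc,
        neg_one_pow_koszulSign_insert_mul htvW.1 htvW.2 hvW]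
      ring
    · simp [htμ, hsupp]
  rw [Finset.sum_congr rfl hterm, Finset.sum_neg_distrib, Finset.mul_sum, if_pos hv,
    add_tsub_cancel_right, ← mul_assoc, ← pow_add, Even.neg_one_pow ⟨_, rfl⟩, one_mul]
  ring

theorem koszulBd_koszulContraction_add_koszulContraction_koszulBd
    (hf : ∀ U, ∀ μ ∈ (f U).support, 1 ≤ (μ + sqExp U) (c (μ + sqExp U)))
    (U : Finset (Fin n)) :
    koszulBd (koszulContraction c f) U + koszulContraction c (koszulBd f) U = f U := by
  classical
  ext μ
  rw [coeff_add]
  by_cases hU : c (μ + sqExp U) ∈ U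
  · have key := coeff_koszulBd_koszulContraction_add_of_mem (f := f)
      (Finset.notMem_erase _ U) (by rw [Finset.insert_erase hU])
    rwa [Finset.insert_erase hU] at key
  · rw [coeff_koszulBd_koszulContraction_of_notMem hU, coeff_koszulContraction, if_neg hU,
      add_zero]
    split_ifs with hμ
    · rfl
    · by_contra h
      have h1 := hf U μ (mem_support_iff.mpr (Ne.symm h))
      simp_all [sqExp_apply]

theorem eq_koszulBd_koszulContraction_of_koszulBd_eq_zero
    (hf : ∀ U, ∀ μ ∈ (f U).support, 1 ≤ (μ + sqExp U) (c (μ + sqExp U)))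
    (hcyc : koszulBd f = 0) : f = koszulBd (koszulContraction c f) := by
  funext U
  rw [← koszulBd_koszulContraction_add_koszulContraction_koszulBd hf U, hcyc,
    koszulContraction_zero, Pi.zero_apply, add_zero]

end KoszulHomotopy

section ConeVertex

open Finsupp (single)

variable {n : ℕ} {G : Set (Finset (Fin n))}

lemma IsGenMultiple.sub_single {μ : Fin n →₀ ℕ} {v : Fin n} (hμ : IsGenMultiple G μ)
    (hv : 2 ≤ μ v) : IsGenMultiple G (μ - single v 1) := by
  obtain ⟨T, hT, hle⟩ := hμ
  refine ⟨T, hT, fun s => ?_⟩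
  have h1 := sqExp_le_one T s
  have h2 := hle s
  rw [Finsupp.tsub_apply, Finsupp.single_apply]
  split_ifs with hvs
  · subst hvs
    omega
  · omega

lemma eq_one_of_le_one_of_card_le_degree {μ : Fin n →₀ ℕ} (hle : ∀ w, μ w ≤ 1)
    (hdeg : n ≤ μ.degree) (w : Fin n) : μ w = 1 := by
  by_contra hw
  have hlt : μ.degree < ∑ _s : Fin n, 1 := by
    rw [Finsupp.degree_eq_sum]
    exact Finset.sum_lt_sum (fun s _ => hle s) ⟨w, Finset.mem_univ w, by have := hle w; omega⟩
  simp only [Finset.sum_const, Finset.card_univ, Fintype.card_fin, smul_eq_mul, mul_one] at hlt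
  omega

noncomputable def coneVertex (v₀ : Fin n) (α : Fin n →₀ ℕ) : Fin n :=
  if h : ∃ v, 2 ≤ α v then h.choose else v₀

/-- Either the cone vertex has exponent at least `2` in `ν`, or `x^ν = x_1 ⋯ x_n` and the
vertex is `v₀`, outside the generator `T₀`. -/
lemma coneVertex_spec {T₀ : Finset (Fin n)} (hT₀ : T₀ ∈ G) {v₀ : Fin n} (hv₀ : v₀ ∉ T₀)
    {ν : Fin n →₀ ℕ} (hν : IsGenMultiple G ν) (hdeg : n ≤ ν.degree) {U : Finset (Fin n)}
    (hU : coneVertex v₀ (ν + sqExp U) ∉ U) :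
    1 ≤ ν (coneVertex v₀ (ν + sqExp U)) ∧
      IsGenMultiple G (ν - single (coneVertex v₀ (ν + sqExp U)) 1) := by
  classical
  by_cases h : ∃ v, 2 ≤ (ν + sqExp U) v
  · rw [coneVertex, dif_pos h] at hU ⊢
    have h2 := h.choose_spec
    rw [Finsupp.add_apply, sqExp_apply, if_neg hU, add_zero] at h2
    exact ⟨by omega, hν.sub_single h2⟩
  · rw [coneVertex, dif_neg h]
    push Not at h
    have hone := eq_one_of_le_one_of_card_le_degree
      (fun w => by have := h w; rw [Finsupp.add_apply] at this; omega) hdeg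
    refine ⟨(hone v₀).ge, T₀, hT₀, fun s => ?_⟩
    rw [Finsupp.tsub_apply, Finsupp.single_apply, sqExp_apply, hone s]
    split_ifs with hs hs' <;> simp_all

end ConeVertex

open Finsupp (single) in
theorem exists_koszulBd_eq_of_koszulBd_eq_zero {R : Type*} [CommRing R] {n : ℕ}
    {G : Set (Finset (Fin n))} {T₀ : Finset (Fin n)} (hT₀ : T₀ ∈ G) {v₀ : Fin n} (hv₀ : v₀ ∉ T₀)
    {e : ℕ} (he : n ≤ e) {f : Finset (Fin n) → MvPolynomial (Fin n) R}
    (hf : ∀ U, ∀ μ ∈ (f U).support, IsGenMultiple G μ ∧ μ.degree = e) (hcyc : koszulBd f = 0) :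
    ∃ g : Finset (Fin n) → MvPolynomial (Fin n) R,
      (∀ U, ∀ μ ∈ (g U).support, IsGenMultiple G μ ∧ μ.degree + 1 = e) ∧ koszulBd g = f := by
  classical
  refine ⟨koszulContraction (coneVertex v₀) f, fun U μ hμ => ?_, ?_⟩
  · rw [mem_support_iff, coeff_koszulContraction] at hμ
    set v := coneVertex v₀ (μ + sqExp U)
    have hvU : v ∈ U := by by_contra h; simp [h] at hμ
    rw [if_pos hvU] at hμ
    have hne : μ + single v 1 ∈ (f (U.erase v)).support :=
      mem_support_iff.mpr fun h => hμ (by rw [h, mul_zero])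
    obtain ⟨hmul, hdeg⟩ := hf _ _ hne
    have hmd : μ + single v 1 + sqExp (U.erase v) = μ + sqExp U := by
      rw [add_assoc, single_add_sqExp_erase hvU]
    have hspec := (coneVertex_spec hT₀ hv₀ hmul (hdeg ▸ he) (U := U.erase v)
      (by rw [hmd]; exact Finset.notMem_erase v U)).2
    rw [hmd, add_tsub_cancel_right] at hspec
    rw [map_add, Finsupp.degree_single] at hdeg
    exact ⟨hspec, hdeg⟩
  · refine (eq_koszulBd_koszulContraction_of_koszulBd_eq_zero (fun U μ hμ => ?_) hcyc).symm
    by_cases hU : coneVertex v₀ (μ + sqExp U) ∈ U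
    · rw [Finsupp.add_apply, sqExp_apply, if_pos hU]
      omega
    · obtain ⟨hmul, hdeg⟩ := hf U μ hμ
      have := (coneVertex_spec hT₀ hv₀ hmul (hdeg ▸ he) hU).1
      rw [Finsupp.add_apply]
      omega

section KoszulStrand

variable {kk : Type} [Field kk] {n : ℕ}

lemma Dmap_apply_eq_koszulBd (m : ℕ) (g : Finset (Fin n) → MvPolynomial (Fin n) kk)
    (T : {T : Finset (Fin n) // T.card = m}) :
    Dmap kk n m (fun T' => g T'.1) T = koszulBd g T.1 :=
  Finset.sum_attach T.1ᶜ fun t => (-1 : kk) ^ koszulSign T.1 t • (X t * g (insert t T.1))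

noncomputable def extendByZero {i : ℕ} (f : KModule kk n i) :
    Finset (Fin n) → MvPolynomial (Fin n) kk :=
  fun U => if h : U.card = i then f ⟨U, h⟩ else 0

lemma extendByZero_apply_coe {i : ℕ} (f : KModule kk n i)
    (T : {T : Finset (Fin n) // T.card = i}) : extendByZero f T.1 = f T := dif_pos T.2

lemma koszulBd_extendByZero_eq_zero {i : ℕ} {f : KModule kk n i}
    (hf : f ∈ LinearMap.ker (Dout kk n i)) : koszulBd (extendByZero f) = 0 := by
  funext U
  by_cases hU : U.card + 1 = i
  · subst hU
    rw [← Dmap_apply_eq_koszulBd _ _ ⟨U, rfl⟩]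
    simp only [extendByZero_apply_coe]
    exact congrFun (LinearMap.mem_ker.mp hf) ⟨U, rfl⟩
  · refine Finset.sum_eq_zero fun t ht => ?_
    rw [extendByZero, dif_neg (by rwa [Finset.card_insert_of_notMem (Finset.mem_compl.mp ht)]),
      mul_zero, smul_zero]

lemma not_torNonzero_of_forall_exists_koszulBd_eq {I : Ideal (MvPolynomial (Fin n) kk)}
    {i : ℕ} {j : ℤ}
    (h : ∀ f : Finset (Fin n) → MvPolynomial (Fin n) kk, (∀ U, f U ∈ gradedPiece I (j - i)) →
      koszulBd f = 0 → ∃ g : Finset (Fin n) → MvPolynomial (Fin n) kk,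
        (∀ U, g U ∈ gradedPiece I (j - (i + 1 : ℕ))) ∧ koszulBd g = f) :
    ¬ TorNonzero I i j := by
  rw [TorNonzero, not_not]
  rintro f ⟨hfs, hfk⟩
  have hext : ∀ U, extendByZero f U ∈ gradedPiece I (j - i) := fun U => by
    by_cases hU : U.card = i
    · rw [extendByZero, dif_pos hU]
      exact Submodule.mem_pi.mp hfs ⟨U, hU⟩ (Set.mem_univ _)
    · rw [extendByZero, dif_neg hU]
      exact Submodule.zero_mem _
  obtain ⟨g, hg, hgf⟩ := h _ hext (koszulBd_extendByZero_eq_zero hfk)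
  refine ⟨fun T => g T.1, Submodule.mem_pi.mpr fun T _ => hg T.1, funext fun T => ?_⟩
  rw [Dmap_apply_eq_koszulBd, hgf, extendByZero_apply_coe]

end KoszulStrand

section TorOfSqfreeIdeal

variable {kk : Type} [Field kk] {n : ℕ} {G : Set (Finset (Fin n))}

theorem not_torNonzero_of_lt {d : ℕ} (hG : ∀ T ∈ G, T.card = d) {i : ℕ} {j : ℤ}
    (hj : j < d + i) : ¬ TorNonzero (Ideal.span (sqMonomial kk '' G)) i j := by
  rw [TorNonzero, not_not]
  rintro f ⟨hfs, -⟩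
  have hf0 : f = 0 := funext fun T => by
    have hT := Submodule.mem_pi.mp hfs T (Set.mem_univ T)
    rwa [gradedPiece_eq_bot hG (by omega), Submodule.mem_bot] at hT
  rw [hf0]
  exact Submodule.zero_mem _

theorem not_torNonzero_of_card_add_le {T₀ : Finset (Fin n)} (hT₀ : T₀ ∈ G) {v₀ : Fin n}
    (hv₀ : v₀ ∉ T₀) {i : ℕ} {j : ℤ} (hj : n + i ≤ j) :
    ¬ TorNonzero (Ideal.span (sqMonomial kk '' G)) i j := by
  refine not_torNonzero_of_forall_exists_koszulBd_eq fun f hf hcyc => ?_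
  obtain ⟨e, he⟩ : ∃ e : ℕ, j - i = e := ⟨(j - i).toNat, by omega⟩
  simp only [he, mem_gradedPiece_iff_s13] at hf
  obtain ⟨g, hg, hgf⟩ :=
    exists_koszulBd_eq_of_koszulBd_eq_zero hT₀ hv₀ (e := e) (by omega) hf hcyc
  refine ⟨g, fun U => ?_, hgf⟩
  have hn := v₀.pos
  rw [show j - ((i + 1 : ℕ) : ℤ) = ((e - 1 : ℕ) : ℤ) by omega, mem_gradedPiece_iff_s13]
  exact fun μ hμ => ⟨(hg U μ hμ).1, by have := (hg U μ hμ).2; omega⟩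

theorem torNonzero_zero {d : ℕ} (hG : ∀ T ∈ G, T.card = d) {T₀ : Finset (Fin n)}
    (hT₀ : T₀ ∈ G) : TorNonzero (Ideal.span (sqMonomial kk '' G)) 0 d := by
  classical
  intro hle
  have hmem : (fun _ => sqMonomial kk T₀ : KModule kk n 0) ∈
      koszulStrand (Ideal.span (sqMonomial kk '' G)) 0 d ⊓ LinearMap.ker (Dout kk n 0) := by
    refine ⟨Submodule.mem_pi.mpr fun _ _ => ?_, rfl⟩
    rw [Nat.cast_zero, sub_zero, mem_gradedPiece_iff_s13, sqMonomial_eq_monomial,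
      support_monomial, if_neg one_ne_zero]
    rintro μ hμ
    rw [Finset.mem_singleton.mp hμ, degree_sqExp, hG T₀ hT₀]
    exact ⟨⟨T₀, hT₀, le_rfl⟩, rfl⟩
  obtain ⟨g, hg, hgf⟩ := Submodule.mem_map.mp (hle hmem)
  have hg0 : g = 0 := funext fun T => by
    have hT := Submodule.mem_pi.mp hg T (Set.mem_univ T)
    rwa [gradedPiece_eq_bot hG (by omega), Submodule.mem_bot] at hT
  have h0 : sqMonomial kk T₀ = 0 := by
    rw [← congrFun hgf ⟨∅, Finset.card_empty⟩, hg0, map_zero, Pi.zero_apply]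
  rw [sqMonomial_eq_monomial, monomial_eq_zero] at h0
  exact one_ne_zero h0

end TorOfSqfreeIdeal

/-- **Corollary 2.12.** Any non-zero ideal generated by squarefree monomials of degree `d`
in `k[x_1,…,x_{d+1}]` has a linear free resolution, i.e. its regularity equals `d`. -/
theorem linear_resolution_in_dplus1_vars (kk : Type) [Field kk] (d : ℕ)
    (I : Ideal (MvPolynomial (Fin (d + 1)) kk)) (hI : I ≠ ⊥)
    (hgen : IsSqfreeMonomialIdealGenInDeg I d) :
    reg I = (d : ℤ) := by
  obtain ⟨G, hG, rfl⟩ := hgen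
  obtain ⟨T₀, hT₀⟩ : G.Nonempty := Set.nonempty_iff_ne_empty.mpr fun h => hI (by simp [h])
  obtain ⟨v₀, hv₀⟩ : ∃ v₀, v₀ ∉ T₀ := by
    by_contra! h
    have := Finset.card_le_card (fun v _ => h v : Finset.univ ⊆ T₀)
    simp [hG T₀ hT₀] at this
  suffices h : {r : ℤ | ∃ (i : ℕ) (j : ℤ), TorNonzero (Ideal.span (sqMonomial kk '' G)) i j ∧
      r = j - i} = {(d : ℤ)} by
    rw [reg, h, csSup_singleton]
  refine Set.eq_singleton_iff_unique_mem.mpr ⟨⟨0, d, torNonzero_zero hG hT₀, by simp⟩, ?_⟩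
  rintro _ ⟨i, j, htor, rfl⟩
  have hlow := mt (not_torNonzero_of_lt hG) (not_not.mpr htor)
  have hhigh := mt (not_torNonzero_of_card_add_le hT₀ hv₀) (not_not.mpr htor)
  push_cast at hlow hhigh
  omega
end
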